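/- arXiv:1606.04938 — 8 statements merged into one kernel-verified Lean document; each statement's English description precedes it below -/
import Mathlib

section
/- Let (P,⪯₊,⪯₋) be a compatible double poset. Then the double order polytope T_O(P,⪯₊,⪯₋) is exactly the set of pairs (f,t) ∈ ℝ^P × ℝ satisfying ℓ_C(f) − sgn(C)·t ≤ 1 for every alternating chain C of (P,⪯₊,⪯₋) (including the improper alternating chains ⊥ ≺_σ ⊤). -/
open Set Pointwise

/-- The order polytope of a finite poset `(P, le)`: order-preserving maps into `[0,1]`. -/
def orderPoly (P : Type*) [Fintype P] (le : P → P → Prop) : Set (P → ℝ) :=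
  {f | (∀ a, 0 ≤ f a ∧ f a ≤ 1) ∧ ∀ a b, le a b → f a ≤ f b}

/-- The double order polytope `T_O(P, lep, lem) = conv((2·O(P₊) × {1}) ∪ ((−2·O(P₋)) × {−1}))`. -/
def doubleOrderPoly (P : Type*) [Fintype P] (lep lem : P → P → Prop) :
    Set ((P → ℝ) × ℝ) :=
  convexHull ℝ
    (((fun f => (f, (1 : ℝ))) '' ((2 : ℝ) • orderPoly P lep)) ∪
     ((fun f => (f, (-1 : ℝ))) '' ((-2 : ℝ) • orderPoly P lem)))

/-- A double poset is compatible if some linear order refines both partial orders. -/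
def Compatible (P : Type*) (lep lem : P → P → Prop) : Prop :=
  ∃ l : P → P → Prop, IsLinearOrder P l ∧
    (∀ a b, lep a b → l a b) ∧ (∀ a b, lem a b → l a b)

/-- An alternating chain `⊥ = p₀ ≺_σ p₁ ≺_{−σ} p₂ ≺_σ ⋯ ≺ p_k = ⊤` of the double poset
`(P, lep, lem)`, recorded by its sign `sg = σ ∈ {1,−1}` and the sequence
`q j = p_{j+1}` (for `0 ≤ j < m`, `m = k − 1`) of its interior elements; the relations
involving the adjoined global minimum `⊥` and maximum `⊤` hold automatically, and the
`j`-th interior step `p_{j+1} ≺ p_{j+2}` uses the order with sign `σ·(−1)^{j+1}`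
(strictness of the steps follows from injectivity).  The improper chains `⊥ ≺_σ ⊤`
correspond to `m = 0`. -/
structure AltChain (P : Type*) (lep lem : P → P → Prop) where
  sg : ℤ
  hsg : sg = 1 ∨ sg = -1
  m : ℕ
  q : Fin m → P
  inj : Function.Injective q
  step : ∀ (j : ℕ) (h : j + 1 < m),
    (if sg * (-1) ^ (j + 1) = 1 then lep else lem)
      (q ⟨j, Nat.lt_of_succ_lt h⟩) (q ⟨j + 1, h⟩)

/-- The linear functional `ℓ_C(f) = σ · ∑_{i=1}^{k−1} (−1)^i f(p_i)` of an alternating chain. -/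
def AltChain.ell {P : Type*} {lep lem : P → P → Prop}
    (C : AltChain P lep lem) (f : P → ℝ) : ℝ :=
  (C.sg : ℝ) * ∑ j : Fin C.m, (-1 : ℝ) ^ ((j : ℕ) + 1) * f (C.q j)

/-- The sign `sgn(C) = σ·(−1)^{k−1}` of the last relation of an alternating chain. -/
def AltChain.sgn {P : Type*} {lep lem : P → P → Prop}
    (C : AltChain P lep lem) : ℝ :=
  (C.sg : ℝ) * (-1 : ℝ) ^ C.m

/-!
A vertex `(2g, 1)` with `g ∈ O(P, ⪯₊)` satisfies every chain inequality because, read from the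
top, the `⪯₊`-steps of an alternating chain pair the terms of `ℓ_C(g)` into nonpositive
differences, leaving terms `-g(p) ≤ 0` and, if the last relation is `⪯₊`, one term `g(p) ≤ 1`;
the vertices `(-2h, -1)` are symmetric.

Conversely, let `(f, t)` satisfy all chain inequalities and let `W` be the least function with
`W ≥ 0`, `W ≥ f`, `W` monotone for `⪯₊` and `W - f` monotone for `⪯₋`. Its value `W p` is a
supremum of values of `ℓ` along alternating walks ending at `p`; compatibility makes these walks
injective, i.e. alternating chains, and the chain inequalities for such a chain and for the chain
with `p` removed give `W ≤ 1 + t` and `W - f ≤ 1 - t`. Hence `W = (1 + t) g` and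
`W - f = (1 - t) h` with `g ∈ O(P, ⪯₊)`, `h ∈ O(P, ⪯₋)`, and
`(f, t) = (1 + t)/2 • (2g, 1) + (1 - t)/2 • (-2h, -1)`.
-/

def signRel {P : Type*} (lep lem : P → P → Prop) (s : ℤ) : P → P → Prop :=
  if s = 1 then lep else lem

lemma isPartialOrder_signRel {P : Type*} {lep lem : P → P → Prop} (hp : IsPartialOrder P lep)
    (hm : IsPartialOrder P lem) (s : ℤ) : IsPartialOrder P (signRel lep lem s) := by
  unfold signRel
  split_ifs <;> assumption

lemma Compatible.exists_isPartialOrder_refining {P : Type*} {lep lem : P → P → Prop}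
    (hcomp : Compatible P lep lem) :
    ∃ l : P → P → Prop, IsPartialOrder P l ∧ ∀ s a b, signRel lep lem s a b → l a b := by
  obtain ⟨l, hl, hlp, hlm⟩ := hcomp
  refine ⟨l, hl.toIsPartialOrder, fun s a b h => ?_⟩
  unfold signRel at h
  split_ifs at h
  exacts [hlp a b h, hlm a b h]

namespace AltChain

variable {P : Type*} {lep lem : P → P → Prop}

lemma sgn_eq_intCast (C : AltChain P lep lem) : C.sgn = ((C.sg * (-1) ^ C.m : ℤ) : ℝ) := by
  simp [sgn]

lemma ell_add (C : AltChain P lep lem) (f g : P → ℝ) : C.ell (f + g) = C.ell f + C.ell g := by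
  simp only [ell, Pi.add_apply, mul_add, Finset.sum_add_distrib]

lemma ell_smul (C : AltChain P lep lem) (c : ℝ) (f : P → ℝ) : C.ell (c • f) = c * C.ell f := by
  simp only [ell, Pi.smul_apply, smul_eq_mul, Finset.mul_sum]
  exact Finset.sum_congr rfl fun _ _ => by ring

lemma isLinearMap_ell_sub_sgn_mul (C : AltChain P lep lem) :
    IsLinearMap ℝ fun x : (P → ℝ) × ℝ => C.ell x.1 - C.sgn * x.2 where
  map_add x y := by simp only [Prod.fst_add, Prod.snd_add, ell_add]; ring
  map_smul c x := by simp only [Prod.smul_fst, Prod.smul_snd, ell_smul, smul_eq_mul]; ring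

def nil (lep lem : P → P → Prop) (s : ℤ) (hs : s = 1 ∨ s = -1) : AltChain P lep lem :=
  ⟨s, hs, 0, Fin.elim0, fun i => i.elim0, fun _ h => absurd h (by omega)⟩

lemma nil_ell (s : ℤ) (hs : s = 1 ∨ s = -1) (f : P → ℝ) : (nil lep lem s hs).ell f = 0 := by
  show (s : ℝ) * ∑ j : Fin 0, _ = 0
  simp

lemma nil_sgn (s : ℤ) (hs : s = 1 ∨ s = -1) : (nil (P := P) lep lem s hs).sgn = s := by
  simp [nil, sgn]

/-- The chain `⊥ ≺ p ≺ ⊤` whose last relation has sign `s`. -/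
def single (lep lem : P → P → Prop) (s : ℤ) (hs : s = 1 ∨ s = -1) (p : P) : AltChain P lep lem :=
  ⟨-s, by omega, 1, fun _ => p, fun i j _ => Subsingleton.elim i j, fun _ h => absurd h (by omega)⟩

lemma single_sgn (s : ℤ) (hs : s = 1 ∨ s = -1) (p : P) : (single lep lem s hs p).sgn = s := by
  simp [single, sgn]

lemma single_ell (s : ℤ) (hs : s = 1 ∨ s = -1) (p : P) (f : P → ℝ) :
    (single lep lem s hs p).ell f = s * f p := by
  show ((-s : ℤ) : ℝ) * ∑ j : Fin 1, (-1 : ℝ) ^ ((j : ℕ) + 1) * f p = _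
  simp

def snoc (C : AltChain P lep lem) (p : P) (hp : p ∉ Set.range C.q)
    (hlast : ∀ i : Fin C.m, (i : ℕ) + 1 = C.m →
      signRel lep lem (C.sg * (-1) ^ ((i : ℕ) + 1)) (C.q i) p) : AltChain P lep lem where
  sg := C.sg
  hsg := C.hsg
  m := C.m + 1
  q := Fin.snoc C.q p
  inj := Fin.snoc_injective_of_injective C.inj hp
  step j h := by
    have hj : j < C.m := by omega
    rw [show (⟨j, _⟩ : Fin (C.m + 1)) = Fin.castSucc ⟨j, hj⟩ from rfl, Fin.snoc_castSucc]
    rcases Nat.lt_or_ge (j + 1) C.m with hj' | hj'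
    · rw [show (⟨j + 1, h⟩ : Fin (C.m + 1)) = Fin.castSucc ⟨j + 1, hj'⟩ from rfl,
        Fin.snoc_castSucc]
      exact C.step j hj'
    · rw [show (⟨j + 1, h⟩ : Fin (C.m + 1)) = Fin.last C.m from Fin.ext (by simp; omega),
        Fin.snoc_last]
      exact hlast ⟨j, hj⟩ (by simp; omega)

section snoc

variable (C : AltChain P lep lem) (p : P) (hp : p ∉ Set.range C.q)
  (hlast : ∀ i : Fin C.m, (i : ℕ) + 1 = C.m →
    signRel lep lem (C.sg * (-1) ^ ((i : ℕ) + 1)) (C.q i) p)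

@[simp] lemma snoc_sg : (C.snoc p hp hlast).sg = C.sg := rfl

@[simp] lemma snoc_m : (C.snoc p hp hlast).m = C.m + 1 := rfl

@[simp] lemma snoc_q : (C.snoc p hp hlast).q = Fin.snoc C.q p := rfl

lemma snoc_sgn : (C.snoc p hp hlast).sgn = -C.sgn := by
  simp only [sgn, snoc_sg, snoc_m, pow_succ]
  ring

lemma snoc_ell (f : P → ℝ) : (C.snoc p hp hlast).ell f = C.ell f - C.sgn * f p := by
  show (C.sg : ℝ) * ∑ j : Fin (C.m + 1),
      (-1 : ℝ) ^ ((j : ℕ) + 1) * f (Fin.snoc (α := fun _ => P) C.q p j) =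
    C.sg * ∑ j : Fin C.m, (-1 : ℝ) ^ ((j : ℕ) + 1) * f (C.q j) - C.sg * (-1) ^ C.m * f p
  simp only [Fin.sum_univ_castSucc, Fin.snoc_castSucc, Fin.snoc_last, Fin.val_castSucc,
    Fin.val_last]
  ring

end snoc

end AltChain

theorem two_mul_alternatingSum_le_of_mem_orderPoly {P : Type*} [Fintype P]
    {le : P → P → Prop} {g : P → ℝ} (hg : g ∈ orderPoly P le) {sg : ℤ} (hsg : sg = 1 ∨ sg = -1) :
    ∀ {n : ℕ} (q : Fin n → P), (∀ (j : ℕ) (h : j + 1 < n), sg * (-1) ^ (j + 1) = 1 →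
      le (q ⟨j, Nat.lt_of_succ_lt h⟩) (q ⟨j + 1, h⟩)) →
    2 * ((sg : ℝ) * ∑ j : Fin n, (-1) ^ ((j : ℕ) + 1) * g (q j)) ≤ 1 + sg * (-1) ^ n
  | 0, _, _ => by rcases hsg with rfl | rfl <;> norm_num
  | 1, q, _ => by
    have := hg.1 (q 0)
    rcases hsg with rfl | rfl <;> norm_num <;> linarith
  | n + 2, q, hq => by
    have ih₁ := two_mul_alternatingSum_le_of_mem_orderPoly hg hsg
      (fun i : Fin (n + 1) => q i.castSucc) fun j h => hq j (by omega)
    have ih₀ := two_mul_alternatingSum_le_of_mem_orderPoly hg hsg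
      (fun i : Fin n => q i.castSucc.castSucc) fun j h => hq j (by omega)
    have hstep : sg * (-1) ^ (n + 1) = 1 →
        g (q (Fin.last n).castSucc) ≤ g (q (Fin.last (n + 1))) :=
      fun h => hg.2 _ _ (hq n (by omega) h)
    have hlast := hg.1 (q (Fin.last (n + 1)))
    simp only [Fin.sum_univ_castSucc, Fin.val_castSucc, Fin.val_last] at ih₁ ⊢
    -- either the last term is `≤ 1` and the rest is bounded by `ih₁`,
    -- or the last two terms form a nonpositive difference and the rest is bounded by `ih₀`
    rcases hsg with rfl | rfl <;> rcases Nat.even_or_odd n with hn | hn <;>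
      simp [pow_succ, hn.neg_one_pow] at hstep ih₀ ih₁ ⊢ <;> linarith

namespace AltChain

variable {P : Type*} [Fintype P] {lep lem : P → P → Prop}

theorem two_mul_ell_le_of_mem_orderPoly_lep (C : AltChain P lep lem) {g : P → ℝ}
    (hg : g ∈ orderPoly P lep) : 2 * C.ell g ≤ 1 + C.sgn :=
  two_mul_alternatingSum_le_of_mem_orderPoly hg C.hsg C.q fun j hj hs => by
    simpa [hs] using C.step j hj

theorem sgn_sub_one_le_two_mul_ell_of_mem_orderPoly_lem (C : AltChain P lep lem) {h : P → ℝ}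
    (hh : h ∈ orderPoly P lem) : C.sgn - 1 ≤ 2 * C.ell h := by
  have := two_mul_alternatingSum_le_of_mem_orderPoly hh (sg := -C.sg) (by have := C.hsg; omega)
    C.q fun j hj hs => by simpa [show C.sg * (-1) ^ (j + 1) ≠ 1 by linarith] using C.step j hj
  simp only [ell, sgn, Int.cast_neg] at this ⊢
  linarith

end AltChain

theorem convex_setOf_forall_altChain {P : Type*} (lep lem : P → P → Prop) :
    Convex ℝ {x : (P → ℝ) × ℝ | ∀ C : AltChain P lep lem, C.ell x.1 - C.sgn * x.2 ≤ 1} := by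
  simp only [Set.ofPred_forall]
  exact convex_iInter fun C => convex_halfSpace_le C.isLinearMap_ell_sub_sgn_mul 1

theorem mem_smul_orderPoly {P : Type*} [Fintype P] {le : P → P → Prop} {W : P → ℝ} {c : ℝ}
    (hW : ∀ a, 0 ≤ W a ∧ W a ≤ c) (hmono : ∀ a b, le a b → W a ≤ W b) :
    W ∈ c • orderPoly P le := by
  rcases eq_or_ne c 0 with rfl | hc
  · obtain rfl : W = 0 := funext fun a => le_antisymm (hW a).2 (hW a).1
    exact ⟨0, ⟨fun _ => by simp, fun _ _ _ => le_rfl⟩, smul_zero _⟩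
  have hc₀ : ∀ a, 0 < c := fun a => ((hW a).1.trans (hW a).2).lt_of_ne' hc
  refine ⟨c⁻¹ • W, ⟨fun a => ?_, fun a b hab => ?_⟩, smul_inv_smul₀ hc W⟩
  · simp only [Pi.smul_apply, smul_eq_mul]
    exact ⟨by positivity [(hW a).1, hc₀ a], inv_mul_le_one_of_le₀ (hW a).2 (hc₀ a).le⟩
  · exact mul_le_mul_of_nonneg_left (hmono a b hab) (inv_nonneg.2 (hc₀ a).le)

theorem mem_doubleOrderPoly_of_mem_orderPoly {P : Type*} [Fintype P] {lep lem : P → P → Prop}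
    {g h : P → ℝ} {t : ℝ} (ht₀ : -1 ≤ t) (ht₁ : t ≤ 1) (hg : g ∈ orderPoly P lep)
    (hh : h ∈ orderPoly P lem) :
    ((1 + t) • g - (1 - t) • h, t) ∈ doubleOrderPoly P lep lem := by
  refine segment_subset_convexHull (x := ((2 : ℝ) • g, (1 : ℝ))) (y := ((-2 : ℝ) • h, (-1 : ℝ)))
    (mem_union_left _ (mem_image_of_mem (fun f => (f, (1 : ℝ))) (smul_mem_smul_set hg)))
    (mem_union_right _ (mem_image_of_mem (fun f => (f, (-1 : ℝ))) (smul_mem_smul_set hh)))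
    ⟨(1 + t) / 2, (1 - t) / 2, by linarith, by linarith, by ring, ?_⟩
  refine Prod.ext (funext fun a => ?_) ?_ <;> simp <;> ring

section AltPath

variable {P : Type*} {lep lem : P → P → Prop} {f : P → ℝ}

/-- `AltPath lep lem f p s v`: some alternating walk, not necessarily injective, ends at `p`,
its last relation (the one into `⊤`) has sign `s`, and its functional `ℓ` takes the value `v`
at `f`. -/
inductive AltPath (lep lem : P → P → Prop) (f : P → ℝ) : P → ℤ → ℝ → Prop
  | single (p : P) {s : ℤ} (hs : s = 1 ∨ s = -1) : AltPath lep lem f p s (s * f p)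
  | snoc {a p : P} {s : ℤ} {v : ℝ} :
      AltPath lep lem f a s v → a ≠ p → signRel lep lem s a p →
        AltPath lep lem f p (-s) (v - s * f p)

/-- The step into `a` has sign `s`, so by transitivity `a` can be replaced by `p`. -/
theorem AltPath.replaceLast {s : ℤ} (hs : IsPartialOrder P (signRel lep lem s)) {a p : P}
    {v : ℝ} (h : AltPath lep lem f a (-s) v) (hap : a ≠ p) (hrel : signRel lep lem s a p) :
    AltPath lep lem f p (-s) (v + s * f a - s * f p) := by
  generalize hs' : -s = s' at h
  cases h with
  | single _ hs'' =>
    convert AltPath.single (lep := lep) (lem := lem) (f := f) p hs'' using 1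
    subst hs'
    push_cast
    ring
  | @snoc c _ s'' v' h' hca hrel' =>
    obtain rfl : s = s'' := neg_injective hs'
    have hcp : c ≠ p := by
      rintro rfl
      exact hap (hs.antisymm _ _ hrel hrel')
    convert h'.snoc hcp (hs.trans _ _ _ hrel' hrel) using 1
    ring

/-- The walk stays `l`-below its endpoint, so extending it along `l` never repeats an element. -/
theorem AltPath.exists_altChain {l : P → P → Prop} (hl : IsPartialOrder P l)
    (hle : ∀ s a b, signRel lep lem s a b → l a b) {p : P} {s : ℤ} {v : ℝ}
    (h : AltPath lep lem f p s v) :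
    ∃ C : AltChain P lep lem, C.sgn = s ∧ C.ell f = v ∧
      (∀ i, l (C.q i) p) ∧ ∀ i : Fin C.m, (i : ℕ) + 1 = C.m → C.q i = p := by
  induction h with
  | single p hs =>
    exact ⟨.single lep lem _ hs p, AltChain.single_sgn .., AltChain.single_ell ..,
      fun _ => hl.refl p, fun _ _ => rfl⟩
  | @snoc a p s v _ hap hrel ih =>
    obtain ⟨C, hsgn, hell, hbelow, hlast⟩ := ih
    have hlap : l a p := hle s a p hrel
    have hp : p ∉ Set.range C.q := by
      rintro ⟨i, rfl⟩
      exact hap (hl.antisymm _ _ hlap (hbelow i))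
    have hsign : C.sg * (-1) ^ C.m = s := by exact_mod_cast C.sgn_eq_intCast.symm.trans hsgn
    have hlast' : ∀ i : Fin C.m, (i : ℕ) + 1 = C.m →
        signRel lep lem (C.sg * (-1) ^ ((i : ℕ) + 1)) (C.q i) p := by
      intro i hi
      rwa [hi, hsign, hlast i hi]
    refine ⟨C.snoc p hp hlast', ?_, ?_, ?_, ?_⟩
    · rw [AltChain.snoc_sgn, hsgn, Int.cast_neg]
    · rw [AltChain.snoc_ell, hsgn, hell]
    · intro i
      induction i using Fin.lastCases with
      | last => simpa using hl.refl p
      | cast i => simpa using hl.trans _ _ _ (hbelow i) hlap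
    · intro i hi
      obtain rfl : i = Fin.last C.m := Fin.ext (by simpa using hi)
      simp

end AltPath

section Majorant

variable {P : Type*} {lep lem : P → P → Prop} {f : P → ℝ} {t : ℝ}

theorem AltPath.sub_mul_le (hcomp : Compatible P lep lem)
    (hx : ∀ C : AltChain P lep lem, C.ell f - C.sgn * t ≤ 1) {p : P} {s : ℤ} {v : ℝ}
    (h : AltPath lep lem f p s v) : v - s * t ≤ 1 := by
  obtain ⟨l, hl, hle⟩ := hcomp.exists_isPartialOrder_refining
  obtain ⟨C, hsgn, hell, -⟩ := h.exists_altChain hl hle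
  simpa [hsgn, hell] using hx C

theorem AltPath.sub_mul_add_mul_le (hcomp : Compatible P lep lem)
    (hx : ∀ C : AltChain P lep lem, C.ell f - C.sgn * t ≤ 1) {p : P} {s : ℤ} {v : ℝ}
    (h : AltPath lep lem f p s v) : v - s * f p + s * t ≤ 1 := by
  cases h with
  | single p hs =>
    have := hx (.nil lep lem (-s) (by omega))
    rw [AltChain.nil_ell, AltChain.nil_sgn, Int.cast_neg] at this
    linarith
  | snoc h' _ _ =>
    have := h'.sub_mul_le hcomp hx
    push_cast
    linarith

def altPathValues (lep lem : P → P → Prop) (f : P → ℝ) (p : P) : Set ℝ :=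
  {w | AltPath lep lem f p 1 w ∨ AltPath lep lem f p (-1) (w - f p)}

theorem zero_mem_altPathValues (p : P) : 0 ∈ altPathValues lep lem f p :=
  Or.inr (by simpa using AltPath.single (lep := lep) (lem := lem) (f := f) p (s := -1) (by simp))

theorem self_mem_altPathValues (p : P) : f p ∈ altPathValues lep lem f p :=
  Or.inl (by simpa using AltPath.single (lep := lep) (lem := lem) (f := f) p (s := 1) (by simp))

theorem altPathValues_subset_of_lep (hp : IsPartialOrder P lep) (hm : IsPartialOrder P lem)
    {a b : P} (hab : lep a b) : altPathValues lep lem f a ⊆ altPathValues lep lem f b := by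
  rcases eq_or_ne a b with rfl | hne
  · rfl
  have hrel : signRel lep lem 1 a b := by simpa [signRel] using hab
  rintro w (h | h)
  · exact Or.inr (by simpa using h.snoc hne hrel)
  · exact Or.inr (by simpa using h.replaceLast (isPartialOrder_signRel hp hm 1) hne hrel)

theorem add_sub_mem_altPathValues_of_lem (hp : IsPartialOrder P lep)
    (hm : IsPartialOrder P lem) {a b : P} (hab : lem a b) {w : ℝ}
    (hw : w ∈ altPathValues lep lem f a) : w + (f b - f a) ∈ altPathValues lep lem f b := by
  rcases eq_or_ne a b with rfl | hne
  · simpa using hw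
  have hrel : signRel lep lem (-1) a b := by simpa [signRel] using hab
  refine Or.inl ?_
  rcases hw with h | h
  · have h' : AltPath lep lem f a (-(-1)) w := by simpa using h
    convert h'.replaceLast (isPartialOrder_signRel hp hm (-1)) hne hrel using 2
    · simp
    · push_cast; ring
  · convert h.snoc hne hrel using 2
    · simp
    · push_cast; ring

theorem le_of_mem_altPathValues (hcomp : Compatible P lep lem)
    (hx : ∀ C : AltChain P lep lem, C.ell f - C.sgn * t ≤ 1) {p : P} {w : ℝ}
    (hw : w ∈ altPathValues lep lem f p) : w ≤ 1 + t ∧ w ≤ f p + (1 - t) := by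
  rcases hw with h | h <;>
  · have h₁ := h.sub_mul_le hcomp hx
    have h₂ := h.sub_mul_add_mul_le hcomp hx
    push_cast at h₁ h₂
    constructor <;> linarith

theorem exists_mem_smul_orderPoly_of_forall_altChain [Fintype P] (hp : IsPartialOrder P lep)
    (hm : IsPartialOrder P lem) (hcomp : Compatible P lep lem)
    (hx : ∀ C : AltChain P lep lem, C.ell f - C.sgn * t ≤ 1) :
    ∃ W : P → ℝ, W ∈ (1 + t) • orderPoly P lep ∧ W - f ∈ (1 - t) • orderPoly P lem := by
  have hle {p w} (hw : w ∈ altPathValues lep lem f p) := le_of_mem_altPathValues hcomp hx hw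
  have hbdd p : BddAbove (altPathValues lep lem f p) := ⟨1 + t, fun _ hw => (hle hw).1⟩
  have hne p : (altPathValues lep lem f p).Nonempty := ⟨0, zero_mem_altPathValues p⟩
  set W : P → ℝ := fun p => sSup (altPathValues lep lem f p)
  have hW₀ p : 0 ≤ W p := le_csSup (hbdd p) (zero_mem_altPathValues p)
  have hWf p : f p ≤ W p := le_csSup (hbdd p) (self_mem_altPathValues p)
  have hW₁ p : W p ≤ 1 + t := csSup_le (hne p) fun _ hw => (hle hw).1
  have hWf₁ p : W p ≤ f p + (1 - t) := csSup_le (hne p) fun _ hw => (hle hw).2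
  refine ⟨W, mem_smul_orderPoly (fun p => ⟨hW₀ p, hW₁ p⟩) fun a b hab =>
    csSup_le_csSup (hbdd b) (hne a) (altPathValues_subset_of_lep hp hm hab),
    mem_smul_orderPoly (fun p => ⟨by simp [hWf p], by simp; linarith [hWf₁ p]⟩) fun a b hab => ?_⟩
  have : W a + (f b - f a) ≤ W b := by
    rw [← le_sub_iff_add_le]
    exact csSup_le (hne a) fun w hw => le_sub_iff_add_le.2 <|
      le_csSup (hbdd b) (add_sub_mem_altPathValues_of_lem hp hm hab hw)
  simp only [Pi.sub_apply]
  linarith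

end Majorant

/-- For a compatible double poset, the double order polytope is cut out by the
inequalities `ℓ_C(f) − sgn(C)·t ≤ 1` over all alternating chains `C`. -/
theorem doubleOrderPoly_eq_altChain_inequalities
    (P : Type*) [Fintype P] (lep lem : P → P → Prop)
    (hp : IsPartialOrder P lep) (hm : IsPartialOrder P lem)
    (hcomp : Compatible P lep lem) :
    doubleOrderPoly P lep lem =
      {x : (P → ℝ) × ℝ |
        ∀ C : AltChain P lep lem, C.ell x.1 - C.sgn * x.2 ≤ 1} := by
  refine (convexHull_min ?_ (convex_setOf_forall_altChain lep lem)).antisymm ?_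
  · rintro _ (⟨_, ⟨g, hg, rfl⟩, rfl⟩ | ⟨_, ⟨h, hh, rfl⟩, rfl⟩) C
    · have := C.two_mul_ell_le_of_mem_orderPoly_lep hg
      simp only [AltChain.ell_smul]
      linarith
    · have := C.sgn_sub_one_le_two_mul_ell_of_mem_orderPoly_lem hh
      simp only [AltChain.ell_smul]
      linarith
  · rintro ⟨f, t⟩ hx
    have ht₀ := hx (.nil lep lem 1 (by simp))
    have ht₁ := hx (.nil lep lem (-1) (by simp))
    simp only [AltChain.nil_ell, AltChain.nil_sgn, Int.cast_one, Int.cast_neg] at ht₀ ht₁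
    obtain ⟨_, ⟨g, hg, rfl⟩, h, hh, hgh⟩ :=
      exists_mem_smul_orderPoly_of_forall_altChain hp hm hcomp hx
    have hf : f = (1 + t) • g - (1 - t) • h := by
      simp only at hgh
      rw [hgh, sub_sub_cancel]
    rw [hf]
    exact mem_doubleOrderPoly_of_mem_orderPoly (by linarith) (by linarith) hg hh
end

section
/- (i) Every anti-special double poset (one in which ⪯₋ is the equality order, i.e. (P,⪯₋) is an antichain) is compatible. (ii) Every plane double poset (one in which any two distinct elements a,b ∈ P are ⪯₊-comparable if and only if they are not ⪯₋-comparable) is compatible. (iii) If (P₁,⪯¹₊,⪯¹₋) and (P₂,⪯²₊,⪯²₋) are compatible double posets, then their composition — the double poset on the disjoint union P₁ ⊎ P₂ whose plus-order is the disjoint union of ⪯¹₊ and ⪯²₊ (elements of different parts are incomparable) and whose minus-order is the ordinal sum of ⪯¹₋ and ⪯²₋ (it restricts to ⪯¹₋ on P₁ and ⪯²₋ on P₂, and every element of P₁ is below every element of P₂) — is compatible. -/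
/-- (i) Anti-special double posets (the second order is an antichain, i.e. equality) are
compatible; (ii) plane double posets (distinct elements are `lep`-comparable iff not
`lem`-comparable) are compatible; (iii) the composition of two compatible double posets —
disjoint union of the plus-orders and ordinal sum of the minus-orders — is compatible. -/
theorem antiSpecial_plane_compatible_and_composition_compatible :
    (∀ (P : Type) [Fintype P] (lep lem : P → P → Prop),
        IsPartialOrder P lep → IsPartialOrder P lem →
        (∀ a b, lem a b ↔ a = b) → Compatible P lep lem) ∧
    (∀ (P : Type) [Fintype P] (lep lem : P → P → Prop),
        IsPartialOrder P lep → IsPartialOrder P lem →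
        (∀ a b : P, a ≠ b → ((lep a b ∨ lep b a) ↔ ¬(lem a b ∨ lem b a))) →
        Compatible P lep lem) ∧
    (∀ (P₁ P₂ : Type) [Fintype P₁] [Fintype P₂]
        (le1p le1m : P₁ → P₁ → Prop) (le2p le2m : P₂ → P₂ → Prop),
        IsPartialOrder P₁ le1p → IsPartialOrder P₁ le1m →
        IsPartialOrder P₂ le2p → IsPartialOrder P₂ le2m →
        Compatible P₁ le1p le1m → Compatible P₂ le2p le2m →
        Compatible (P₁ ⊕ P₂) (Sum.LiftRel le1p le2p) (Sum.Lex le1m le2m)) := by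
  refine ⟨?_, ?_, ?_⟩
  · -- (i) anti-special
    intro P _ lep lem hp hm heq
    haveI := hp
    obtain ⟨s, hs, hsub⟩ := extend_partialOrder lep
    refine ⟨s, hs, fun a b h => hsub a b h, fun a b h => ?_⟩
    rw [heq a b] at h
    subst h
    exact hs.refl a
  · -- (ii) plane
    intro P _ lep lem hp hm hplane
    refine ⟨fun a b => lep a b ∨ lem a b, ?_, fun a b h => Or.inl h, fun a b h => Or.inr h⟩
    refine { refl := fun a => Or.inl (hp.refl a), trans := ?_, antisymm := ?_, total := ?_ }
    · intro a b c hab hbc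
      by_cases hab' : a = b; · subst hab'; exact hbc
      by_cases hbc' : b = c; · subst hbc'; exact hab
      by_cases hac' : a = c
      · subst hac'; exact Or.inl (hp.refl a)
      rcases hab with hab | hab <;> rcases hbc with hbc | hbc
      · exact Or.inl (hp.trans _ _ _ hab hbc)
      · -- lep a b, lem b c
        by_contra h
        push_neg at h
        by_cases hca : lep c a
        · exact (hplane b c hbc').mp (Or.inr (hp.trans _ _ _ hca hab)) (Or.inl hbc)
        · have hlem : lem a c ∨ lem c a := by
            by_contra h'
            exact h' ((hplane a c hac').mpr (fun hx => h' hx) |> fun hpp =>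
              hpp.elim (fun x => absurd x h.1) (fun x => absurd x hca))
          rcases hlem with hx | hx
          · exact h.2 hx
          · exact (hplane a b hab').mp (Or.inl hab) (Or.inr (hm.trans _ _ _ hbc hx))
      · -- lem a b, lep b c
        by_contra h
        push_neg at h
        by_cases hca : lep c a
        · exact (hplane a b hab').mp (Or.inr (hp.trans _ _ _ hbc hca)) (Or.inl hab)
        · have hlem : lem a c ∨ lem c a := by
            by_contra h'
            exact h' ((hplane a c hac').mpr (fun hx => h' hx) |> fun hpp =>
              hpp.elim (fun x => absurd x h.1) (fun x => absurd x hca))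
          rcases hlem with hx | hx
          · exact h.2 hx
          · exact (hplane b c hbc').mp (Or.inl hbc) (Or.inr (hm.trans _ _ _ hx hab))
      · exact Or.inr (hm.trans _ _ _ hab hbc)
    · intro a b hab hba
      by_contra hne
      rcases hab with hab | hab <;> rcases hba with hba | hba
      · exact hne (hp.antisymm _ _ hab hba)
      · exact (hplane a b hne).mp (Or.inl hab) (Or.inr hba)
      · exact (hplane a b hne).mp (Or.inr hba) (Or.inl hab)
      · exact hne (hm.antisymm _ _ hab hba)
    · intro a b
      by_cases hne : a = b
      · subst hne; exact Or.inl (Or.inl (hp.refl a))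
      by_cases hpc : lep a b ∨ lep b a
      · exact hpc.imp Or.inl Or.inl
      · have := (not_iff_not.mpr (hplane a b hne)).mp hpc
        rw [not_not] at this
        exact this.imp Or.inr Or.inr
  · -- (iii) composition
    rintro P₁ P₂ _ _ le1p le1m le2p le2m h1p h1m h2p h2m ⟨l₁, hl₁, h1p', h1m'⟩ ⟨l₂, hl₂, h2p', h2m'⟩
    refine ⟨Sum.Lex l₁ l₂, ?_, ?_, ?_⟩
    · refine { refl := ?_, trans := ?_, antisymm := ?_, total := ?_ }
      · rintro (a | a)
        · exact Sum.Lex.inl (hl₁.refl a)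
        · exact Sum.Lex.inr (hl₂.refl a)
      · rintro x y z hxy hyz
        cases hxy with
        | inl h =>
          cases hyz with
          | inl h' => exact Sum.Lex.inl (hl₁.trans _ _ _ h h')
          | sep => exact Sum.Lex.sep _ _
        | inr h =>
          cases hyz with
          | inr h' => exact Sum.Lex.inr (hl₂.trans _ _ _ h h')
        | sep =>
          cases hyz with
          | inr h' => exact Sum.Lex.sep _ _
      · rintro x y hxy hyx
        cases hxy with
        | inl h =>
          cases hyx with
          | inl h' => exact congrArg Sum.inl (hl₁.antisymm _ _ h h')
        | inr h =>
          cases hyx with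
          | inr h' => exact congrArg Sum.inr (hl₂.antisymm _ _ h h')
        | sep =>
          cases hyx
      · rintro (a | a) (b | b)
        · exact (hl₁.total a b).imp Sum.Lex.inl Sum.Lex.inl
        · exact Or.inl (Sum.Lex.sep _ _)
        · exact Or.inr (Sum.Lex.sep _ _)
        · exact (hl₂.total a b).imp Sum.Lex.inr Sum.Lex.inr
    · rintro _ _ (⟨h⟩ | ⟨h⟩)
      · exact Sum.Lex.inl (h1p' _ _ h)
      · exact Sum.Lex.inr (h2p' _ _ h)
    · rintro x y h
      cases h
      case inl h => exact Sum.Lex.inl (h1m' _ _ h)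
      case inr h => exact Sum.Lex.inr (h2m' _ _ h)
      case sep => exact Sum.Lex.sep _ _
end

section
/- Let (P,⪯₊,⪯₋) be a compatible double poset, let F₊ ⊆ P be a filter of (P,⪯₊) and F₋ ⊆ P a filter of (P,⪯₋). Then the point 1_{F₊} − 1_{F₋} is an extreme point (vertex) of the Minkowski difference O(P,⪯₊) − O(P,⪯₋) if and only if min_{⪯₊}(F₊) ∩ min_{⪯₋}(F₋) = ∅ and max_{⪯₊}(P ∖ F₊) ∩ max_{⪯₋}(P ∖ F₋) = ∅, where min_{⪯}(S) and max_{⪯}(S) denote the sets of minimal, respectively maximal, elements of S with respect to ⪯. -/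
/-!
A vertex of a Minkowski difference `A - B` of convex sets is a difference `u - w` of vertices
whose decomposition `a - b = u - w` (`a ∈ A`, `b ∈ B`) is unique. If `x` is minimal in both
filters, or maximal in both complements, then setting both indicator vectors to `1/2` at `x` gives
a second decomposition. Conversely, if `f - g = 1_{F₊} - 1_{F₋}` then `f` can only fall short of
`1_{F₊}` on `F₊ ∩ F₋`, where `f = g`; an element of `F₊ ∩ F₋` with `f < 1` that is least in a
common linear extension of `⪯₊` and `⪯₋` is then minimal in `F₊` and in `F₋`. The complements
reduce to the filters through `f ↦ 1 - f`, which reverses both orders.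
-/

open Set Pointwise

/-- A filter (up-set) of the poset `(P, le)`. -/
def IsUpSet {P : Type*} (le : P → P → Prop) (F : Set P) : Prop :=
  ∀ a ∈ F, ∀ b, le a b → b ∈ F

/-- The set of minimal elements of `S` with respect to `le`. -/
def minSet {P : Type*} (le : P → P → Prop) (S : Set P) : Set P :=
  {a ∈ S | ∀ b ∈ S, le b a → b = a}

/-- The set of maximal elements of `S` with respect to `le`. -/
def maxSet {P : Type*} (le : P → P → Prop) (S : Set P) : Set P :=
  {a ∈ S | ∀ b ∈ S, le a b → b = a}

section Convex

variable {𝕜 E : Type*} [Field 𝕜] [LinearOrder 𝕜] [IsStrictOrderedRing 𝕜]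
  [AddCommGroup E] [Module 𝕜 E] {A B : Set E} {u w : E}

theorem sub_mem_extremePoints_sub_iff (hA : Convex 𝕜 A) (hB : Convex 𝕜 B)
    (hu : u ∈ A.extremePoints 𝕜) (hw : w ∈ B.extremePoints 𝕜) :
    u - w ∈ (A - B).extremePoints 𝕜 ↔ ∀ a ∈ A, ∀ b ∈ B, a - b = u - w → a = u := by
  refine ⟨fun h a ha b hb hab => ?_, fun h => ?_⟩
  · -- `u - w` is the midpoint of `a - w` and `u - b`
    have hmid : u - w ∈ openSegment 𝕜 (a - w) (u - b) :=
      ⟨1 / 2, 1 / 2, by norm_num, by norm_num, by norm_num, by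
        linear_combination (norm := module) (1 / 2 : 𝕜) • hab⟩
    simpa using ((mem_extremePoints.1 h).2 _ (sub_mem_sub ha hw.1) _ (sub_mem_sub hu.1 hb) hmid).1
  refine mem_extremePoints.2 ⟨sub_mem_sub hu.1 hw.1, ?_⟩
  rintro _ ⟨a₁, ha₁, b₁, hb₁, rfl⟩ _ ⟨a₂, ha₂, b₂, hb₂, rfl⟩ ⟨s, t, hs, ht, hst, hx⟩
  simp only at hx
  have hu' : s • a₁ + t • a₂ = u :=
    h _ (hA ha₁ ha₂ hs.le ht.le hst) _ (hB hb₁ hb₂ hs.le ht.le hst) (by rw [← hx]; module)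
  have hw' : s • b₁ + t • b₂ = w := by
    linear_combination (norm := module) hu' - hx
  obtain ⟨rfl, rfl⟩ := (mem_extremePoints.1 hu).2 a₁ ha₁ a₂ ha₂ ⟨s, t, hs, ht, hst, hu'⟩
  obtain ⟨rfl, rfl⟩ := (mem_extremePoints.1 hw).2 b₁ hb₁ b₂ hb₂ ⟨s, t, hs, ht, hst, hw'⟩
  exact ⟨rfl, rfl⟩

end Convex

theorem Compatible.swap {P : Type*} {lep lem : P → P → Prop} (h : Compatible P lep lem) :
    Compatible P (Function.swap lep) (Function.swap lem) := by
  obtain ⟨l, hl, hlp, hlm⟩ := h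
  exact ⟨Function.swap l, inferInstance, fun a b => hlp b a, fun a b => hlm b a⟩

theorem Compatible.wellFounded {P : Type*} [Finite P] {lep lem : P → P → Prop}
    (h : Compatible P lep lem) : WellFounded fun b a => (lep b a ∨ lem b a) ∧ b ≠ a := by
  obtain ⟨l, hl, hlp, hlm⟩ := h
  have : IsStrictOrder P fun b a => l b a ∧ b ≠ a :=
    { irrefl := fun a h => h.2 rfl
      trans := fun a b c hab hbc => ⟨trans_of l hab.1 hbc.1,
        fun hac => hab.2 (antisymm_of l hab.1 (hac ▸ hbc.1))⟩ }
  refine Subrelation.wf (fun {b a} hba => ⟨?_, hba.2⟩)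
    (Finite.wellFounded_of_trans_of_irrefl fun b a => l b a ∧ b ≠ a)
  exact hba.1.elim (hlp b a) (hlm b a)

section OrderPolytope

variable {P : Type*} [Fintype P] {le lep lem : P → P → Prop} {F Fp Fm : Set P} {f g : P → ℝ}

theorem convex_orderPoly (le : P → P → Prop) : Convex ℝ (orderPoly P le) := by
  rintro f ⟨hf01, hfle⟩ g ⟨hg01, hgle⟩ s t hs ht hst
  refine ⟨fun a => ?_, fun a b hab => ?_⟩
  · obtain ⟨hf0, hf1⟩ := hf01 a
    obtain ⟨hg0, hg1⟩ := hg01 a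
    simp only [Pi.add_apply, Pi.smul_apply, smul_eq_mul]
    constructor <;> nlinarith
  · simp only [Pi.add_apply, Pi.smul_apply, smul_eq_mul]
    gcongr
    exacts [hfle a b hab, hgle a b hab]

theorem indicator_mem_orderPoly (hF : IsUpSet le F) :
    F.indicator (fun _ => (1 : ℝ)) ∈ orderPoly P le := by
  refine ⟨fun a => ?_, fun a b hab => ?_⟩
  · by_cases ha : a ∈ F <;> simp [ha]
  · by_cases ha : a ∈ F
    · simp [ha, hF a ha b hab]
    · simp [ha, indicator_nonneg]

theorem indicator_mem_extremePoints_orderPoly (hF : IsUpSet le F) :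
    F.indicator (fun _ => (1 : ℝ)) ∈ (orderPoly P le).extremePoints ℝ := by
  have hcube : orderPoly P le ⊆ univ.pi fun _ => Icc 0 1 := fun f hf a _ => hf.1 a
  refine inter_extremePoints_subset_extremePoints_of_subset hcube ⟨indicator_mem_orderPoly hF, ?_⟩
  rw [extremePoints_pi]
  intro a _
  rw [extremePoints_Icc zero_le_one]
  by_cases ha : a ∈ F <;> simp [ha]

theorem one_sub_mem_orderPoly_swap (hf : f ∈ orderPoly P le) :
    1 - f ∈ orderPoly P (Function.swap le) :=
  ⟨fun a => by simp [(hf.1 a).1, (hf.1 a).2], fun a b hab => sub_le_sub_left (hf.2 b a hab) 1⟩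

theorem update_indicator_mem_orderPoly [DecidableEq P] (hF : IsUpSet le F) {x : P}
    (hbelow : ∀ a, le a x → a ≠ x → a ∉ F) (habove : ∀ b, le x b → b ≠ x → b ∈ F)
    {t : ℝ} (ht : t ∈ Icc 0 1) :
    Function.update (F.indicator fun _ => (1 : ℝ)) x t ∈ orderPoly P le := by
  obtain ⟨hind01, hindle⟩ := indicator_mem_orderPoly hF
  refine ⟨fun a => ?_, fun a b hab => ?_⟩
  · rcases eq_or_ne a x with rfl | ha
    · simpa using ht
    · simpa [ha] using hind01 a
  · by_cases ha : a = x <;> by_cases hb : b = x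
    · simp [ha, hb]
    · subst ha
      simp [hb, habove b hab hb, ht.2]
    · subst hb
      simp [ha, hbelow a hab ha, ht.1]
    · simpa [ha, hb] using hindle a b hab

theorem update_indicator_mem_orderPoly_of_mem_minSet [DecidableEq P] (hF : IsUpSet le F)
    {x : P} (hx : x ∈ minSet le F) {t : ℝ} (ht : t ∈ Icc 0 1) :
    Function.update (F.indicator fun _ => (1 : ℝ)) x t ∈ orderPoly P le :=
  update_indicator_mem_orderPoly hF (fun a hax hne haF => hne (hx.2 a haF hax))
    (fun b hxb _ => hF x hx.1 b hxb) ht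

theorem update_indicator_mem_orderPoly_of_mem_maxSet [DecidableEq P] (hF : IsUpSet le F)
    {x : P} (hx : x ∈ maxSet le Fᶜ) {t : ℝ} (ht : t ∈ Icc 0 1) :
    Function.update (F.indicator fun _ => (1 : ℝ)) x t ∈ orderPoly P le :=
  update_indicator_mem_orderPoly hF (fun a hax _ haF => hx.1 (hF a haF x hax))
    (fun b hxb hne => by_contra fun hbF => hne (hx.2 b hbF hxb)) ht

theorem exists_sub_eq_indicator_sub_ne_indicator [DecidableEq P] {x : P}
    (hx : x ∈ Fp ↔ x ∈ Fm)
    (hf : Function.update (Fp.indicator fun _ => (1 : ℝ)) x (1 / 2) ∈ orderPoly P lep)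
    (hg : Function.update (Fm.indicator fun _ => (1 : ℝ)) x (1 / 2) ∈ orderPoly P lem) :
    ∃ f ∈ orderPoly P lep, ∃ g ∈ orderPoly P lem,
      f - g = Fp.indicator (fun _ => 1) - Fm.indicator (fun _ => 1) ∧
        f ≠ Fp.indicator (fun _ => 1) := by
  refine ⟨_, hf, _, hg, ?_, fun h => ?_⟩
  · rw [← Function.update_sub, sub_self]
    apply Function.update_eq_self_iff.2
    by_cases hxp : x ∈ Fp
    · simp [hxp, hx.1 hxp]
    · simp [hxp, mt hx.2 hxp]
  · have := congrFun h x
    by_cases hxp : x ∈ Fp <;> norm_num [hxp] at this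

theorem eq_one_of_sub_eq_indicator_sub (hcomp : Compatible P lep lem)
    (hmin : minSet lep Fp ∩ minSet lem Fm = ∅)
    (hf : f ∈ orderPoly P lep) (hg : g ∈ orderPoly P lem)
    (hfg : f - g = Fp.indicator (fun _ => 1) - Fm.indicator (fun _ => 1))
    {a : P} (ha : a ∈ Fp) : f a = 1 := by
  -- an element where `f` or `g` drops below its indicator lies in `Fp ∩ Fm`, where `f = g`
  have hdrop : ∀ b, b ∈ Fp ∧ f b < 1 ↔ b ∈ Fm ∧ g b < 1 := by
    intro b
    have hb := congrFun hfg b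
    obtain ⟨hf0, hf1⟩ := hf.1 b
    obtain ⟨hg0, hg1⟩ := hg.1 b
    by_cases hbp : b ∈ Fp <;> by_cases hbm : b ∈ Fm <;>
      simp only [Pi.sub_apply, hbp, hbm, indicator_of_mem, indicator_of_notMem, not_false_eq_true,
        sub_self, sub_zero, zero_sub, true_and, false_and, iff_false, false_iff, not_lt] at hb ⊢
    · rw [sub_eq_zero.1 hb]
    all_goals linarith
  have hnodrop : ∀ b, b ∈ Fp → f b < 1 → False := fun b =>
    hcomp.wellFounded.induction (C := fun b => b ∈ Fp → f b < 1 → False) b fun b ih hbp hfb => by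
      obtain ⟨hbm, hgb⟩ := (hdrop b).1 ⟨hbp, hfb⟩
      rcases not_and_or.1 fun h : b ∈ minSet lep Fp ∩ minSet lem Fm => hmin.subset h with hb | hb
      · obtain ⟨c, hcp, hcb, hcne⟩ : ∃ c ∈ Fp, lep c b ∧ c ≠ b := by
          simpa [minSet, hbp] using hb
        exact ih c ⟨Or.inl hcb, hcne⟩ hcp ((hf.2 c b hcb).trans_lt hfb)
      · obtain ⟨c, hcm, hcb, hcne⟩ : ∃ c ∈ Fm, lem c b ∧ c ≠ b := by
          simpa [minSet, hbm] using hb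
        obtain ⟨hcp, hfc⟩ := (hdrop c).2 ⟨hcm, (hg.2 c b hcb).trans_lt hgb⟩
        exact ih c ⟨Or.inr hcb, hcne⟩ hcp hfc
  exact le_antisymm (hf.1 a).2 (not_lt.1 (hnodrop a ha))

theorem eq_zero_of_sub_eq_indicator_sub (hcomp : Compatible P lep lem)
    (hmax : maxSet lep Fpᶜ ∩ maxSet lem Fmᶜ = ∅)
    (hf : f ∈ orderPoly P lep) (hg : g ∈ orderPoly P lem)
    (hfg : f - g = Fp.indicator (fun _ => 1) - Fm.indicator (fun _ => 1))
    {a : P} (ha : a ∉ Fp) : f a = 0 := by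
  have hfg' : (1 - f) - (1 - g) = Fpᶜ.indicator (fun _ => 1) - Fmᶜ.indicator (fun _ => 1) := by
    rw [indicator_compl, indicator_compl]
    linear_combination (norm := abel) -hfg
  simpa using eq_one_of_sub_eq_indicator_sub hcomp.swap hmax (one_sub_mem_orderPoly_swap hf)
    (one_sub_mem_orderPoly_swap hg) hfg' ha

end OrderPolytope

theorem indicator_sub_indicator_extremePoint_iff_general
    (P : Type*) [Fintype P] (lep lem : P → P → Prop)
    (hcomp : Compatible P lep lem)
    (Fp Fm : Set P) (hFp : IsUpSet lep Fp) (hFm : IsUpSet lem Fm) :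
    (Fp.indicator (fun _ => (1 : ℝ)) - Fm.indicator (fun _ => (1 : ℝ))) ∈
        Set.extremePoints ℝ (orderPoly P lep - orderPoly P lem) ↔
      (minSet lep Fp ∩ minSet lem Fm = ∅ ∧
       maxSet lep Fpᶜ ∩ maxSet lem Fmᶜ = ∅) := by
  classical
  have hhalf : (1 / 2 : ℝ) ∈ Icc 0 1 := by norm_num
  rw [sub_mem_extremePoints_sub_iff (convex_orderPoly lep) (convex_orderPoly lem)
    (indicator_mem_extremePoints_orderPoly hFp) (indicator_mem_extremePoints_orderPoly hFm)]
  constructor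
  · intro huniq
    constructor <;> refine Set.eq_empty_iff_forall_notMem.2 fun x ⟨hxp, hxm⟩ => ?_
    · obtain ⟨f, hf, g, hg, hfg, hne⟩ := exists_sub_eq_indicator_sub_ne_indicator
        (iff_of_true hxp.1 hxm.1) (update_indicator_mem_orderPoly_of_mem_minSet hFp hxp hhalf)
        (update_indicator_mem_orderPoly_of_mem_minSet hFm hxm hhalf)
      exact hne (huniq f hf g hg hfg)
    · obtain ⟨f, hf, g, hg, hfg, hne⟩ := exists_sub_eq_indicator_sub_ne_indicator
        (iff_of_false hxp.1 hxm.1) (update_indicator_mem_orderPoly_of_mem_maxSet hFp hxp hhalf)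
        (update_indicator_mem_orderPoly_of_mem_maxSet hFm hxm hhalf)
      exact hne (huniq f hf g hg hfg)
  · rintro ⟨hmin, hmax⟩ f hf g hg hfg
    funext a
    by_cases ha : a ∈ Fp
    · simp [ha, eq_one_of_sub_eq_indicator_sub hcomp hmin hf hg hfg ha]
    · simp [ha, eq_zero_of_sub_eq_indicator_sub hcomp hmax hf hg hfg ha]

/-- For a compatible double poset, `1_{F₊} − 1_{F₋}` is a vertex of the Minkowski
difference `O(P,⪯₊) − O(P,⪯₋)` iff `min(F₊) ∩ min(F₋) = ∅` and
`max(P∖F₊) ∩ max(P∖F₋) = ∅`. -/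
theorem indicator_sub_indicator_extremePoint_iff
    (P : Type*) [Fintype P] (lep lem : P → P → Prop)
    (hp : IsPartialOrder P lep) (hm : IsPartialOrder P lem)
    (hcomp : Compatible P lep lem)
    (Fp Fm : Set P) (hFp : IsUpSet lep Fp) (hFm : IsUpSet lem Fm) :
    (Fp.indicator (fun _ => (1 : ℝ)) - Fm.indicator (fun _ => (1 : ℝ))) ∈
        Set.extremePoints ℝ (orderPoly P lep - orderPoly P lem) ↔
      (minSet lep Fp ∩ minSet lem Fm = ∅ ∧
       maxSet lep Fpᶜ ∩ maxSet lem Fmᶜ = ∅) :=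
  indicator_sub_indicator_extremePoint_iff_general P lep lem hcomp Fp Fm hFp hFm
end

section
/- Let (P,⪯) be a finite poset and consider the induced double poset (P,⪯,⪯). Then the polar of its double order polytope equals the twisted prism of the negated valuation polytope: T_O(P,⪯,⪯)° = conv(((−Val(P)) × {1}) ∪ (Val(P) × {−1})) ⊆ ℝ^P × ℝ. -/
open Set Pointwise

/-- The valuation polytope (in reduced coordinates): `h : P → ℝ` such that
`0 ≤ ∑_{a ∈ F} h(a) ≤ 1` for every filter `F` of `(P, le)`. -/
def valPoly (P : Type*) [Fintype P] (le : P → P → Prop) : Set (P → ℝ) :=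
  {h | ∀ F : Finset P, (∀ a ∈ F, ∀ b, le a b → b ∈ F) →
        0 ≤ ∑ a ∈ F, h a ∧ ∑ a ∈ F, h a ≤ 1}

/-- The polar of a subset of `ℝ^P × ℝ` with respect to the standard inner product. -/
def polarPR (P : Type*) [Fintype P] (S : Set ((P → ℝ) × ℝ)) : Set ((P → ℝ) × ℝ) :=
  {y | ∀ x ∈ S, (∑ a, y.1 a * x.1 a) + y.2 * x.2 ≤ 1}

/-!
Points of the order polytope are layer cakes: a monotone `f : P → [0, M]` is a nonnegative
combination of indicators of filters with total weight at most `M`. Hence a valuation with filter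
sums in `[0, 1]` pairs with `O(P)` into `[0, 1]`, which puts the generators of the twisted prism
into the polar.

Conversely, testing `(w, t)` in the polar against filter indicators gives `-μ ≤ w(F) ≤ ν` with
`μ = (1 + t)/2` and `ν = (1 - t)/2`. It then suffices to find `p` with `p(F) ∈ [0, ν]` and
`p(F) - w(F) ∈ [0, μ]` for all filters, since `(w, t) = μ • (-(p - w)/μ, 1) + ν • (p/ν, -1)`.
Such a `p` exists by linear-programming duality: a dual certificate `y` satisfies
`∑ y_F 1_F = 0`; splitting `y⁺` and `y⁻` according to the active bound gives monotone functions
`A + B = C + D`, and `D - B = min A D - min B C` reduces the dual inequality to two layer-cake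
bounds.
-/

open Finset Matrix

section Polar

variable {P : Type*} [Fintype P]

lemma isLinearMap_dotProduct_add_mul (y : (P → ℝ) × ℝ) :
    IsLinearMap ℝ fun x : (P → ℝ) × ℝ => y.1 ⬝ᵥ x.1 + y.2 * x.2 :=
  ⟨fun x z => by simp only [Prod.fst_add, Prod.snd_add, dotProduct_add]; ring,
    fun c x => by simp only [Prod.smul_fst, Prod.smul_snd, dotProduct_smul, smul_eq_mul]; ring⟩

lemma convex_polarPR (S : Set ((P → ℝ) × ℝ)) : Convex ℝ (polarPR P S) := by
  have : polarPR P S = ⋂ x ∈ S, {y | x.1 ⬝ᵥ y.1 + x.2 * y.2 ≤ 1} := by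
    ext y; simp [polarPR, dotProduct, mul_comm]
  rw [this]
  exact convex_iInter₂ fun x _ => convex_halfSpace_le (isLinearMap_dotProduct_add_mul x) 1

lemma polarPR_convexHull (S : Set ((P → ℝ) × ℝ)) :
    polarPR P (convexHull ℝ S) = polarPR P S :=
  Subset.antisymm (fun _ hy x hx => hy x (subset_convexHull ℝ S hx)) fun y hy _ hx =>
    convexHull_min (t := {x : (P → ℝ) × ℝ | y.1 ⬝ᵥ x.1 + y.2 * x.2 ≤ 1}) hy
      (convex_halfSpace_le (isLinearMap_dotProduct_add_mul y) 1) hx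

lemma mem_polarPR_doubleOrderPoly_iff {lep lem : P → P → Prop} {w : P → ℝ} {t : ℝ} :
    (w, t) ∈ polarPR P (doubleOrderPoly P lep lem) ↔
      (∀ f ∈ orderPoly P lep, 2 * (w ⬝ᵥ f) + t ≤ 1) ∧
        ∀ f ∈ orderPoly P lem, -2 * (w ⬝ᵥ f) - t ≤ 1 := by
  rw [doubleOrderPoly, polarPR_convexHull]
  simp only [polarPR, ← Set.image_smul, Set.image_image, Set.mem_union, or_imp, forall_and,
    Set.forall_mem_image]
  simp [dotProduct, Finset.mul_sum, mul_left_comm, sub_eq_add_neg]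

end Polar

section LayerCake

variable {P : Type*} (le : P → P → Prop)

def IsUpClosed (F : Finset P) : Prop := ∀ a ∈ F, ∀ b, le a b → b ∈ F

def orderCone (P : Type*) (le : P → P → Prop) : Set (P → ℝ) :=
  {f | (∀ a, 0 ≤ f a) ∧ ∀ a b, le a b → f a ≤ f b}

variable {le}

lemma isUpClosed_empty : IsUpClosed le (∅ : Finset P) := by
  simp [IsUpClosed]

lemma inf_mem_orderCone {f g : P → ℝ} (hf : f ∈ orderCone P le) (hg : g ∈ orderCone P le) :
    f ⊓ g ∈ orderCone P le :=
  ⟨fun a => le_inf (hf.1 a) (hg.1 a), fun a b hab => inf_le_inf (hf.2 a b hab) (hg.2 a b hab)⟩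

variable [Fintype P]

lemma isUpClosed_filter_lt {f : P → ℝ} (hf : ∀ a b, le a b → f a ≤ f b) (c : ℝ) :
    IsUpClosed le {a | c < f a} := by
  classical
  intro a ha b hab
  simp only [Finset.mem_filter, Finset.mem_univ, true_and] at ha ⊢
  exact ha.trans_le (hf a b hab)

lemma mem_orderCone_of_mem_orderPoly {f : P → ℝ} (hf : f ∈ orderPoly P le) :
    f ∈ orderCone P le :=
  ⟨fun a => (hf.1 a).1, hf.2⟩

lemma dotProduct_indicator (w : P → ℝ) (F : Finset P) :
    w ⬝ᵥ (F : Set P).indicator 1 = ∑ a ∈ F, w a := by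
  classical
  simp [dotProduct, Set.indicator_apply, Finset.sum_ite_mem]

theorem dotProduct_le_of_forall_sum_le {w : P → ℝ} {β : ℝ}
    (hw : ∀ F, IsUpClosed le F → ∑ a ∈ F, w a ≤ β) {f : P → ℝ} (hf : f ∈ orderCone P le)
    {M : ℝ} (hM : 0 ≤ M) (hfM : ∀ a, f a ≤ M) : w ⬝ᵥ f ≤ M * β := by
  classical
  have hβ : 0 ≤ β := by simpa using hw ∅ isUpClosed_empty
  induction hn : #{a | 0 < f a} using Nat.strong_induction_on generalizing f M with
  | _ n ih =>
  set F : Finset P := {a | 0 < f a}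
  rcases F.eq_empty_or_nonempty with hF | hF
  · have hf0 : f = 0 := funext fun a => (hf.1 a).antisymm' <| not_lt.1 fun ha =>
      (Finset.eq_empty_iff_forall_notMem.1 hF) a (by simp [F, ha])
    simpa [hf0] using mul_nonneg hM hβ
  obtain ⟨a₀, ha₀, hmin⟩ := F.exists_min_image f hF
  set t := f a₀
  have ht : 0 < t := by simpa [F] using ha₀
  set f' : P → ℝ := fun a => max (f a - t) 0
  have hsplit : f = f' + t • (F : Set P).indicator 1 := by
    ext a
    by_cases ha : 0 < f a
    · have : t ≤ f a := hmin a (by simpa [F] using ha)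
      simp [f', F, ha, this]
    · have : f a = 0 := le_antisymm (not_lt.1 ha) (hf.1 a)
      simp [f', F, this, ht.le]
  have hf' : f' ∈ orderCone P le :=
    ⟨fun a => le_max_right _ _, fun a b hab => max_le_max_right 0 (by linarith [hf.2 a b hab])⟩
  have hcard : #{a | 0 < f' a} < n := by
    rw [← hn]
    refine Finset.card_lt_card ⟨fun a ha => ?_, fun h => ?_⟩
    · simp only [f', F, Finset.mem_filter, Finset.mem_univ, true_and, lt_max_iff, lt_irrefl,
        or_false, sub_pos] at ha ⊢
      exact ht.trans ha
    · have := h ha₀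
      simp [f', t] at this
  calc w ⬝ᵥ f = w ⬝ᵥ f' + t * ∑ a ∈ F, w a := by
        rw [hsplit, dotProduct_add, dotProduct_smul, dotProduct_indicator, smul_eq_mul]
    _ ≤ (M - t) * β + t * β := by
        gcongr
        · exact ih _ hcard hf' (by linarith [hfM a₀]) (fun a => max_le (by linarith [hfM a])
            (by linarith [hfM a₀])) rfl
        · exact hw F (isUpClosed_filter_lt hf.2 0)
    _ = M * β := by ring

theorem le_dotProduct_of_forall_le_sum {w : P → ℝ} {α : ℝ}
    (hw : ∀ F, IsUpClosed le F → α ≤ ∑ a ∈ F, w a) {f : P → ℝ} (hf : f ∈ orderCone P le)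
    {M : ℝ} (hM : 0 ≤ M) (hfM : ∀ a, f a ≤ M) : M * α ≤ w ⬝ᵥ f := by
  have := dotProduct_le_of_forall_sum_le (w := -w) (β := -α)
    (fun F hF => by simpa using neg_le_neg (hw F hF)) hf hM hfM
  rw [neg_dotProduct] at this
  linarith

end LayerCake

section TwistedPrism

variable {P : Type*} [Fintype P] {le : P → P → Prop}

lemma dotProduct_mem_Icc_of_mem_valPoly {h f : P → ℝ} (hh : h ∈ valPoly P le)
    (hf : f ∈ orderPoly P le) : 0 ≤ h ⬝ᵥ f ∧ h ⬝ᵥ f ≤ 1 := by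
  have hf' := mem_orderCone_of_mem_orderPoly hf
  have hf1 : ∀ a, f a ≤ 1 := fun a => (hf.1 a).2
  constructor
  · simpa using le_dotProduct_of_forall_le_sum (fun F hF => (hh F hF).1) hf' zero_le_one hf1
  · simpa using dotProduct_le_of_forall_sum_le (fun F hF => (hh F hF).2) hf' zero_le_one hf1

def twistedPrism (Q : Set (P → ℝ)) : Set ((P → ℝ) × ℝ) :=
  convexHull ℝ ((fun h => (h, (1 : ℝ))) '' (-Q) ∪ (fun h => (h, (-1 : ℝ))) '' Q)

lemma twistedPrism_valPoly_subset_polarPR :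
    twistedPrism (valPoly P le) ⊆ polarPR P (doubleOrderPoly P le le) := by
  refine convexHull_min ?_ (convex_polarPR _)
  rintro _ (⟨h, hh, rfl⟩ | ⟨h, hh, rfl⟩)
  · have bound (f) (hf : f ∈ orderPoly P le) := dotProduct_mem_Icc_of_mem_valPoly hh hf
    simp only [neg_dotProduct] at bound
    exact mem_polarPR_doubleOrderPoly_iff.2
      ⟨fun f hf => by linarith [(bound f hf).1], fun f hf => by linarith [(bound f hf).2]⟩
  · have bound (f) (hf : f ∈ orderPoly P le) := dotProduct_mem_Icc_of_mem_valPoly hh hf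
    exact mem_polarPR_doubleOrderPoly_iff.2
      ⟨fun f hf => by linarith [(bound f hf).2], fun f hf => by linarith [(bound f hf).1]⟩

end TwistedPrism

lemma LinearMap.apply_eq_zero_of_forall_lt {𝕜 M : Type*} [Field 𝕜] [Preorder 𝕜] [AddCommGroup M]
    [Module 𝕜 M] (g : M →ₗ[𝕜] 𝕜) {v : 𝕜} (h : ∀ x, v < g x) (x : M) : g x = 0 := by
  by_contra hx
  have := h ((v / g x) • x)
  rw [map_smul, smul_eq_mul, div_mul_cancel₀ _ hx] at this
  exact lt_irrefl _ this

section Duality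

variable {P ι : Type*} [Fintype P] [Fintype ι] {le : P → P → Prop} {χ : Matrix ι P ℝ}

lemma vecMul_mem_orderCone (hχ : ∀ i, χ i ∈ orderPoly P le) {c : ι → ℝ} (hc : 0 ≤ c) :
    c ᵥ* χ ∈ orderCone P le :=
  ⟨fun a => Finset.sum_nonneg fun i _ => mul_nonneg (hc i) ((hχ i).1 a).1,
    fun a b hab => Finset.sum_le_sum fun i _ => mul_le_mul_of_nonneg_left ((hχ i).2 a b hab) (hc i)⟩

lemma vecMul_apply_le_sum (hχ : ∀ i, χ i ∈ orderPoly P le) {c : ι → ℝ} (hc : 0 ≤ c) (a : P) :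
    (c ᵥ* χ) a ≤ ∑ i, c i :=
  Finset.sum_le_sum fun i _ => mul_le_of_le_one_right (hc i) ((hχ i).1 a).2

variable {w : P → ℝ} {μ ν : ℝ}

lemma dotProduct_sub_le_of_add_eq
    (hw : ∀ F, IsUpClosed le F → -μ ≤ ∑ a ∈ F, w a ∧ ∑ a ∈ F, w a ≤ ν)
    {A B C D : P → ℝ} (hA : A ∈ orderCone P le) (hB : B ∈ orderCone P le)
    (hC : C ∈ orderCone P le) (hD : D ∈ orderCone P le) {Y₁ Y₂ : ℝ} (hY₁ : 0 ≤ Y₁)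
    (hY₂ : 0 ≤ Y₂) (hAY : ∀ a, A a ≤ Y₁) (hBY : ∀ a, B a ≤ Y₂) (hABCD : A + B = C + D) :
    w ⬝ᵥ D - w ⬝ᵥ B ≤ ν * Y₁ + μ * Y₂ := by
  have hDB : D - B = A ⊓ D - B ⊓ C := by
    ext a
    have := congrFun hABCD a
    simp only [Pi.add_apply] at this
    simp only [Pi.sub_apply, Pi.inf_apply]
    rcases le_total (A a) (D a) with h | h
    · rw [inf_of_le_left h, inf_of_le_right (by linarith)]; linarith
    · rw [inf_of_le_right h, inf_of_le_left (by linarith)]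
  have hAD : w ⬝ᵥ (A ⊓ D) ≤ Y₁ * ν :=
    dotProduct_le_of_forall_sum_le (fun F hF => (hw F hF).2) (inf_mem_orderCone hA hD) hY₁
      fun a => inf_le_left.trans (hAY a)
  have hBC : Y₂ * -μ ≤ w ⬝ᵥ (B ⊓ C) :=
    le_dotProduct_of_forall_le_sum (fun F hF => (hw F hF).1) (inf_mem_orderCone hB hC) hY₂
      fun a => inf_le_left.trans (hBY a)
  rw [← dotProduct_sub, hDB, dotProduct_sub]
  linarith

lemma sum_posPart_mul_sub_negPart_mul_nonneg (hχ : ∀ i, χ i ∈ orderPoly P le)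
    (hw : ∀ F, IsUpClosed le F → -μ ≤ ∑ a ∈ F, w a ∧ ∑ a ∈ F, w a ≤ ν)
    {y : ι → ℝ} (hy : y ᵥ* χ = 0) :
    0 ≤ ∑ i, ((y i)⁺ * min ν ((χ *ᵥ w) i + μ) - (y i)⁻ * max 0 ((χ *ᵥ w) i)) := by
  classical
  set g := χ *ᵥ w
  set s : Set ι := {i | ν ≤ g i + μ}
  set z : Set ι := {i | 0 < g i}
  set a₁ := s.indicator y⁺
  set a₂ := sᶜ.indicator y⁺
  set c₃ := zᶜ.indicator y⁻
  set c₄ := z.indicator y⁻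
  have hterm (i : ι) : (y i)⁺ * min ν (g i + μ) - (y i)⁻ * max 0 (g i) =
      a₁ i * ν + a₂ i * (g i + μ) - c₄ i * g i := by
    by_cases hs : ν ≤ g i + μ <;> by_cases hz : 0 < g i <;>
      simp [a₁, a₂, c₄, s, z, hs, hz, le_of_lt, not_lt.1, not_le.1]
  have hsum : ∑ i, (a₁ i * ν + a₂ i * (g i + μ) - c₄ i * g i) =
      w ⬝ᵥ (a₂ ᵥ* χ) - w ⬝ᵥ (c₄ ᵥ* χ) + (ν * ∑ i, a₁ i + μ * ∑ i, a₂ i) := by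
    simp only [dotProduct_comm w, ← dotProduct_mulVec]
    simp only [dotProduct, Finset.mul_sum, ← Finset.sum_sub_distrib, ← Finset.sum_add_distrib]
    exact Finset.sum_congr rfl fun i _ => by ring
  have hbal : a₁ ᵥ* χ + a₂ ᵥ* χ = c₃ ᵥ* χ + c₄ ᵥ* χ := by
    rw [← add_vecMul, ← add_vecMul, Set.indicator_self_add_compl, add_comm c₃,
      Set.indicator_self_add_compl, ← sub_eq_zero, ← sub_vecMul, posPart_sub_negPart, hy]
  have hnonneg (t : Set ι) {f : ι → ℝ} (hf : 0 ≤ f) : 0 ≤ t.indicator f :=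
    fun i => Set.indicator_nonneg (fun j _ => hf j) i
  have ha₁ := hnonneg s (posPart_nonneg y)
  have ha₂ := hnonneg sᶜ (posPart_nonneg y)
  have key := dotProduct_sub_le_of_add_eq hw (vecMul_mem_orderCone hχ ha₁)
    (vecMul_mem_orderCone hχ ha₂) (vecMul_mem_orderCone hχ (hnonneg zᶜ (negPart_nonneg y)))
    (vecMul_mem_orderCone hχ (hnonneg z (negPart_nonneg y))) (Finset.sum_nonneg fun i _ => ha₁ i)
    (Finset.sum_nonneg fun i _ => ha₂ i) (vecMul_apply_le_sum hχ ha₁) (vecMul_apply_le_sum hχ ha₂)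
    hbal
  rw [Finset.sum_congr rfl fun i _ => hterm i, hsum]
  linarith

theorem exists_mulVec_mem_Icc (hχ : ∀ i, χ i ∈ orderPoly P le)
    (hw : ∀ F, IsUpClosed le F → -μ ≤ ∑ a ∈ F, w a ∧ ∑ a ∈ F, w a ≤ ν) :
    ∃ p : P → ℝ, ∀ i, max 0 ((χ *ᵥ w) i) ≤ (χ *ᵥ p) i ∧ (χ *ᵥ p) i ≤ min ν ((χ *ᵥ w) i + μ) := by
  classical
  set L : ι → ℝ := fun i => max 0 ((χ *ᵥ w) i)
  set U : ι → ℝ := fun i => min ν ((χ *ᵥ w) i + μ)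
  have hrow (i : ι) : -μ ≤ (χ *ᵥ w) i ∧ (χ *ᵥ w) i ≤ ν := by
    have hχi := mem_orderCone_of_mem_orderPoly (hχ i)
    have hχi1 (a : P) : χ i a ≤ 1 := ((hχ i).1 a).2
    have h₁ := le_dotProduct_of_forall_le_sum (fun F hF => (hw F hF).1) hχi zero_le_one hχi1
    have h₂ := dotProduct_le_of_forall_sum_le (fun F hF => (hw F hF).2) hχi zero_le_one hχi1
    rw [one_mul, dotProduct_comm] at h₁ h₂
    exact ⟨h₁, h₂⟩
  have hμ : 0 ≤ μ := by simpa using (hw ∅ isUpClosed_empty).1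
  have hν : 0 ≤ ν := by simpa using (hw ∅ isUpClosed_empty).2
  have hLU : L ≤ U := fun i =>
    max_le (le_min hν (by linarith [hrow i])) (le_min (hrow i).2 (by linarith))
  suffices ¬Disjoint (Icc L U) (LinearMap.range χ.mulVecLin) by
    obtain ⟨_, ⟨hL, hU⟩, p, rfl⟩ := Set.not_disjoint_iff.1 this
    exact ⟨p, fun i => ⟨hL i, hU i⟩⟩
  intro hdisj
  obtain ⟨f, u, v, hfu, huv, hfv⟩ := geometric_hahn_banach_compact_closed (convex_Icc L U)
    isCompact_Icc (Submodule.convex _) (Submodule.closed_of_finiteDimensional _) hdisj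
  set y : ι → ℝ := fun i => f fun j => if i = j then 1 else 0
  have hf (b : ι → ℝ) : f b = b ⬝ᵥ y := f.toLinearMap.pi_apply_eq_sum_univ b
  have hy : y ᵥ* χ = 0 := by
    have := (f.toLinearMap ∘ₗ χ.mulVecLin).apply_eq_zero_of_forall_lt
      (fun p => hfv _ ⟨p, rfl⟩) (y ᵥ* χ)
    rwa [LinearMap.comp_apply, mulVecLin_apply, ContinuousLinearMap.coe_coe, hf, dotProduct_comm,
      dotProduct_mulVec, dotProduct_self_eq_zero] at this
  set corner : ι → ℝ := fun i => if 0 ≤ y i then U i else L i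
  have hcorner : corner ∈ Icc L U := by
    constructor <;> intro i <;> by_cases hi : 0 ≤ y i <;> simp [corner, hi, hLU i]
  have hval : corner ⬝ᵥ y = ∑ i, ((y i)⁺ * U i - (y i)⁻ * L i) := by
    refine Finset.sum_congr rfl fun i _ => ?_
    by_cases hi : 0 ≤ y i
    · simp [corner, hi, mul_comm]
    · simp [corner, hi, (not_le.1 hi).le, mul_comm]
  have hv : v < 0 := by simpa using hfv 0 (Submodule.zero_mem _)
  have := hfu corner hcorner
  rw [hf, hval] at this
  linarith [sum_posPart_mul_sub_negPart_mul_nonneg hχ hw hy]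

end Duality

section Decomposition

variable {P : Type*} [Fintype P] {le : P → P → Prop}

lemma indicator_mem_orderPoly_s3 {F : Finset P} (hF : IsUpClosed le F) :
    (F : Set P).indicator 1 ∈ orderPoly P le := by
  classical
  refine ⟨fun a => ?_, fun a b hab => ?_⟩
  · by_cases ha : a ∈ F <;> simp [ha]
  · by_cases ha : a ∈ F
    · simp [ha, hF a ha b hab]
    · simp [ha, Set.indicator_nonneg]

theorem exists_forall_isUpClosed_sum_mem_Icc {w : P → ℝ} {μ ν : ℝ}
    (hw : ∀ F, IsUpClosed le F → -μ ≤ ∑ a ∈ F, w a ∧ ∑ a ∈ F, w a ≤ ν) :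
    ∃ p : P → ℝ, ∀ F, IsUpClosed le F →
      max 0 (∑ a ∈ F, w a) ≤ ∑ a ∈ F, p a ∧ ∑ a ∈ F, p a ≤ min ν (∑ a ∈ F, w a + μ) := by
  classical
  let χ : Matrix {F : Finset P // IsUpClosed le F} P ℝ := fun F => (F.1 : Set P).indicator 1
  have hχ (q : P → ℝ) (F) : (χ *ᵥ q) F = ∑ a ∈ F.1, q a := by
    rw [mulVec, dotProduct_comm, dotProduct_indicator]
  obtain ⟨p, hp⟩ := exists_mulVec_mem_Icc (χ := χ) (fun F => indicator_mem_orderPoly_s3 F.2) hw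
  exact ⟨p, fun F hF => by simpa only [hχ] using hp ⟨F, hF⟩⟩

lemma inv_smul_mem_valPoly {q : P → ℝ} {c : ℝ}
    (hq : ∀ F, IsUpClosed le F → 0 ≤ ∑ a ∈ F, q a ∧ ∑ a ∈ F, q a ≤ c) : c⁻¹ • q ∈ valPoly P le := by
  intro F hF
  have hc : 0 ≤ c := by simpa using (hq ∅ isUpClosed_empty).2
  simp only [Pi.smul_apply, smul_eq_mul, ← Finset.mul_sum]
  exact ⟨mul_nonneg (inv_nonneg.2 hc) (hq F hF).1, inv_mul_le_one_of_le₀ (hq F hF).2 hc⟩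

theorem mk_sub_mem_twistedPrism_valPoly {w : P → ℝ} {μ ν : ℝ} (hμν : μ + ν = 1)
    (hw : ∀ F, IsUpClosed le F → -μ ≤ ∑ a ∈ F, w a ∧ ∑ a ∈ F, w a ≤ ν) :
    (w, μ - ν) ∈ twistedPrism (valPoly P le) := by
  have hμ : 0 ≤ μ := by simpa using (hw ∅ isUpClosed_empty).1
  have hν : 0 ≤ ν := by simpa using (hw ∅ isUpClosed_empty).2
  rcases hμ.eq_or_lt with rfl | hμ
  · refine subset_convexHull ℝ _ (Or.inr ⟨w, fun F hF => ?_, by simp [← hμν]⟩)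
    simpa [← hμν] using hw F hF
  rcases hν.eq_or_lt with rfl | hν
  · refine subset_convexHull ℝ _ (Or.inl ⟨w, fun F hF => ?_, by simp [← hμν]⟩)
    have := hw F hF
    simp only [Pi.neg_apply, Finset.sum_neg_distrib, ← hμν]
    constructor <;> linarith
  obtain ⟨p, hp⟩ := exists_forall_isUpClosed_sum_mem_Icc hw
  have hu : μ⁻¹ • (p - w) ∈ valPoly P le := inv_smul_mem_valPoly fun F hF => by
    have := hp F hF
    simp only [Pi.sub_apply, Finset.sum_sub_distrib, max_le_iff, le_min_iff] at this ⊢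
    constructor <;> linarith
  have hv : ν⁻¹ • p ∈ valPoly P le := inv_smul_mem_valPoly fun F hF => by
    have := hp F hF
    simp only [max_le_iff, le_min_iff] at this
    exact ⟨this.1.1, this.2.1⟩
  have hcomb : μ • (-(μ⁻¹ • (p - w)), (1 : ℝ)) + ν • (ν⁻¹ • p, (-1 : ℝ)) = (w, μ - ν) := by
    ext a
    · simp [smul_smul, hμ.ne', hν.ne']
    · simp [sub_eq_add_neg]
  rw [← hcomb]
  refine convex_convexHull ℝ _ (subset_convexHull ℝ _ ?_) (subset_convexHull ℝ _ ?_) hμ.le hν.le hμν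
  · exact Or.inl ⟨_, by simpa using hu, rfl⟩
  · exact Or.inr ⟨_, hv, rfl⟩

theorem forall_isUpClosed_sum_mem_Icc_of_mem_polarPR {w : P → ℝ} {t : ℝ}
    (hwt : (w, t) ∈ polarPR P (doubleOrderPoly P le le)) (F : Finset P) (hF : IsUpClosed le F) :
    -((1 + t) / 2) ≤ ∑ a ∈ F, w a ∧ ∑ a ∈ F, w a ≤ (1 - t) / 2 := by
  obtain ⟨h₁, h₂⟩ := mem_polarPR_doubleOrderPoly_iff.1 hwt
  have h₁ := h₁ ((F : Set P).indicator 1) (indicator_mem_orderPoly_s3 hF)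
  have h₂ := h₂ ((F : Set P).indicator 1) (indicator_mem_orderPoly_s3 hF)
  rw [dotProduct_indicator] at h₁ h₂
  constructor <;> linarith

end Decomposition

/-- For the double poset induced by a poset, the polar of the double order polytope
is the twisted prism `conv(((−Val(P)) × {1}) ∪ (Val(P) × {−1}))` over the negated
valuation polytope. -/
theorem polar_doubleOrderPoly_eq_twistedPrism_valPoly
    (P : Type*) [Fintype P] (le : P → P → Prop) (h : IsPartialOrder P le) :
    polarPR P (doubleOrderPoly P le le) =
      convexHull ℝ
        (((fun h => (h, (1 : ℝ))) '' (-(valPoly P le))) ∪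
         ((fun h => (h, (-1 : ℝ))) '' (valPoly P le))) := by
  refine Subset.antisymm (fun ⟨w, t⟩ hwt => ?_) twistedPrism_valPoly_subset_polarPR
  have hprism := mk_sub_mem_twistedPrism_valPoly (by ring)
    (forall_isUpClosed_sum_mem_Icc_of_mem_polarPR hwt)
  rwa [show (1 + t) / 2 - (1 - t) / 2 = t by ring] at hprism
end

section
/- Let (P,⪯) be a finite poset. Then the set Val^±(P) = {h : P → ℝ | −1 ≤ Σ_{a∈F} h(a) ≤ 1 for every filter F of P} equals the Minkowski difference Val(P) − Val(P) = {h₁ − h₂ : h₁, h₂ ∈ Val(P)}. -/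
/-!
Write `h = y - z` and build `y` and `z` one point at a time, going down the poset: `W` is the
upper set of points already treated, and a new point `q` with `insert q W` still an upper set
receives the same value shift `c` in `y` and in `z`, so that `y - z = h` is kept. The invariant
`Extendable W y z` asks that the sums of `y` and `z` over upper sets inside `W` be nonnegative and
that `y(A) - z(B) ≤ 1` and `z(A) - y(B) ≤ 1` whenever the upper sets `A` and `B` agree outside `W`.
It is necessary, since later steps change `y(A)` and `z(B)` by the same amount; for `W = ∅` it is
the hypothesis `|h(F)| ≤ 1`, and for `W = P` it says that `y` and `z` lie in `Val(P)`. Adding `q`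
imposes lower and upper bounds on `c`, and every lower bound is below every upper bound by the
invariant at `W`, applied either to the sets with `q` removed or to unions and intersections of
the sets involved, on which sums are modular.
-/

open Set Pointwise

namespace ValuationPolytope

open Finset

variable {P : Type*} [DecidableEq P]

theorem sdiff_eq_sdiff_of_sdiff_insert {W A B : Finset P} {q : P}
    (hAB : A \ insert q W = B \ insert q W) (hq : q ∈ A ↔ q ∈ B) : A \ W = B \ W := by
  ext a
  have := congrArg (a ∈ ·) hAB
  simp only [Finset.mem_sdiff, Finset.mem_insert, eq_iff_iff] at this ⊢
  by_cases haq : a = q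
  · subst haq; simp [hq]
  · simpa [haq] using this

variable [PartialOrder P]

def HalfExtendable (W : Finset P) (y z : P → ℝ) : Prop :=
  (∀ G : Finset P, IsUpperSet (G : Set P) → G ⊆ W → 0 ≤ ∑ a ∈ G, y a) ∧
  ∀ A B : Finset P, IsUpperSet (A : Set P) → IsUpperSet (B : Set P) → A \ W = B \ W →
    ∑ a ∈ A, y a - ∑ a ∈ B, z a ≤ 1

def Extendable (W : Finset P) (y z : P → ℝ) : Prop :=
  HalfExtendable W y z ∧ HalfExtendable W z y

theorem Extendable.symm {W : Finset P} {y z : P → ℝ} (hs : Extendable W y z) :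
    Extendable W z y :=
  And.symm hs

structure Partners (W : Finset P) (q : P) (A B : Finset P) : Prop where
  isUpperSet_left : IsUpperSet (A : Set P)
  isUpperSet_right : IsUpperSet (B : Set P)
  mem_left : q ∈ A
  notMem_right : q ∉ B
  sdiff_eq : A \ insert q W = B \ insert q W

section Partners

variable {W A B A₁ B₁ : Finset P} {q : P}

theorem partners_empty (hA : IsUpperSet (A : Set P)) (hq : q ∈ A) (hAW : A ⊆ insert q W) :
    Partners W q A ∅ :=
  ⟨hA, coe_empty ▸ isUpperSet_empty, hq, notMem_empty q, by simpa [sdiff_eq_empty_iff_subset]⟩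

theorem Partners.mem_iff_mem (hp : Partners W q A B) {a : P} (haq : a ≠ q) (haW : a ∉ W) :
    a ∈ A ↔ a ∈ B := by
  simpa [haq, haW] using congrArg (a ∈ ·) hp.sdiff_eq

theorem Partners.erase_sdiff (hp : Partners W q A B) : A.erase q \ W = B \ W := by
  ext a
  have := hp.mem_iff_mem (a := a); have := hp.notMem_right
  simp only [Finset.mem_sdiff, Finset.mem_erase]; grind

theorem Partners.isUpperSet_erase (hW : IsUpperSet (W : Set P)) (hqW : q ∉ W)
    (hp : Partners W q A B) : IsUpperSet (A.erase q : Set P) := by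
  rw [coe_erase]
  refine hp.isUpperSet_left.erase fun a ha haq => by_contra fun hne => ?_
  by_cases haW : a ∈ W
  · exact hqW (hW haq haW)
  · exact hp.notMem_right (hp.isUpperSet_right haq ((hp.mem_iff_mem hne haW).1 ha))

theorem Partners.union_sdiff (hp : Partners W q A B) (hp₁ : Partners W q A₁ B₁) :
    (A ∪ B₁) \ W = (A₁ ∪ B) \ W := by
  ext a
  have := hp.mem_iff_mem (a := a); have := hp₁.mem_iff_mem (a := a)
  have := hp.mem_left; have := hp₁.mem_left
  simp only [Finset.mem_sdiff, Finset.mem_union]; grind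

theorem Partners.inter_sdiff (hp : Partners W q A B) (hp₁ : Partners W q A₁ B₁) :
    (A ∩ B₁) \ W = (A₁ ∩ B) \ W := by
  ext a
  have := hp.mem_iff_mem (a := a); have := hp₁.mem_iff_mem (a := a)
  have := hp.notMem_right; have := hp₁.notMem_right
  simp only [Finset.mem_sdiff, Finset.mem_inter]; grind

end Partners

section Step

variable {W : Finset P} {q : P} {y z : P → ℝ}

/-- The lower bounds on the shift `c` at `q`; a pair `(A, ∅)` of partners is just an upper set
`A ∋ q` inside `insert q W`, and yields the bound `0 ≤ y(A) + c`. -/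
def stepLower (W : Finset P) (q : P) (y z : P → ℝ) : Set ℝ :=
  {r | ∃ A B, Partners W q A B ∧
    (B = ∅ ∧ r = -∑ a ∈ A, y a ∨ r = ∑ a ∈ B, y a - ∑ a ∈ A, z a - 1)}

def stepUpper (W : Finset P) (q : P) (y z : P → ℝ) : Set ℝ :=
  {r | ∃ A B, Partners W q A B ∧ r = ∑ a ∈ B, z a - ∑ a ∈ A, y a + 1}

theorem le_of_mem_stepLower_of_mem_stepUpper (hW : IsUpperSet (W : Set P)) (hqW : q ∉ W)
    (hs : Extendable W y z) {l u : ℝ} (hl : l ∈ stepLower W q y z ∪ stepLower W q z y)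
    (hu : u ∈ stepUpper W q y z) : l ≤ u := by
  obtain ⟨A, B, hp, rfl⟩ := hu
  have hAB := hs.1.2 _ _ (hp.isUpperSet_erase hW hqW) hp.isUpperSet_right hp.erase_sdiff
  have hyA := add_sum_erase A y hp.mem_left
  rcases hl with ⟨A₁, B₁, hp₁, ⟨rfl, rfl⟩ | rfl⟩ | ⟨A₁, B₁, hp₁, ⟨rfl, rfl⟩ | rfl⟩
  · have h₁ := hs.1.1 _ (hp₁.isUpperSet_erase hW hqW)
      (sdiff_eq_empty_iff_subset.1 (by simpa using hp₁.erase_sdiff))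
    have := add_sum_erase A₁ y hp₁.mem_left
    linarith
  · have h₁ := hs.1.2 _ _ (coe_union A B₁ ▸ hp.isUpperSet_left.union hp₁.isUpperSet_right)
      (coe_union A₁ B ▸ hp₁.isUpperSet_left.union hp.isUpperSet_right) (hp.union_sdiff hp₁)
    have h₂ := hs.1.2 _ _ (coe_inter A B₁ ▸ hp.isUpperSet_left.inter hp₁.isUpperSet_right)
      (coe_inter A₁ B ▸ hp₁.isUpperSet_left.inter hp.isUpperSet_right) (hp.inter_sdiff hp₁)
    have := sum_union_inter (s₁ := A) (s₂ := B₁) (f := y)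
    have := sum_union_inter (s₁ := A₁) (s₂ := B) (f := z)
    linarith
  · have h₁ := hs.1.2 _ _ hp.isUpperSet_left
      (coe_union A₁ B ▸ hp₁.isUpperSet_left.union hp.isUpperSet_right)
      (by simpa using hp.union_sdiff hp₁)
    have h₂ := hs.2.1 _ (coe_inter A₁ B ▸ hp₁.isUpperSet_left.inter hp.isUpperSet_right)
      (sdiff_eq_empty_iff_subset.1 (by simpa using (hp.inter_sdiff hp₁).symm))
    have := sum_union_inter (s₁ := A₁) (s₂ := B) (f := z)
    linarith
  · have h₁ := hs.2.2 _ _ hp₁.isUpperSet_right (hp₁.isUpperSet_erase hW hqW) hp₁.erase_sdiff.symm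
    have := add_sum_erase A₁ y hp₁.mem_left
    linarith

theorem HalfExtendable.insert (hs : HalfExtendable W y z) {c : ℝ}
    (hlow : ∀ l ∈ stepLower W q y z, l ≤ c) (hup : ∀ u ∈ stepUpper W q y z, c ≤ u) :
    HalfExtendable (insert q W) (y + Pi.single q c) (z + Pi.single q c) := by
  simp only [HalfExtendable, Pi.add_apply, sum_add_distrib, sum_pi_single']
  constructor
  · intro G hG hGW
    split_ifs with hqG
    · have := hlow _ ⟨G, ∅, partners_empty hG hqG hGW, Or.inl ⟨rfl, rfl⟩⟩
      linarith
    · simpa using hs.1 G hG ((Finset.subset_insert_iff_of_notMem hqG).1 hGW)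
  · intro A B hA hB hAB
    by_cases hqA : q ∈ A <;> by_cases hqB : q ∈ B <;> simp only [hqA, hqB, if_true, if_false]
    · have := hs.2 A B hA hB (sdiff_eq_sdiff_of_sdiff_insert hAB (iff_of_true hqA hqB))
      linarith
    · have := hup _ ⟨A, B, ⟨hA, hB, hqA, hqB, hAB⟩, rfl⟩
      linarith
    · have := hlow _ ⟨B, A, ⟨hB, hA, hqB, hqA, hAB.symm⟩, Or.inr rfl⟩
      linarith
    · simpa using hs.2 A B hA hB (sdiff_eq_sdiff_of_sdiff_insert hAB (iff_of_false hqA hqB))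

theorem Extendable.exists_insert (hW : IsUpperSet (W : Set P)) (hqW : q ∉ W)
    (hW' : IsUpperSet ((insert q W : Finset P) : Set P)) (hs : Extendable W y z) :
    ∃ c : ℝ, Extendable (insert q W) (y + Pi.single q c) (z + Pi.single q c) := by
  have hp : Partners W q (insert q W) ∅ :=
    partners_empty hW' (mem_insert_self q W) subset_rfl
  have hle : ∀ l ∈ stepLower W q y z ∪ stepLower W q z y,
      ∀ u ∈ stepUpper W q y z ∪ stepUpper W q z y, l ≤ u := by
    rintro l hl u (hu | hu)
    · exact le_of_mem_stepLower_of_mem_stepUpper hW hqW hs hl hu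
    · exact le_of_mem_stepLower_of_mem_stepUpper hW hqW hs.symm (Set.union_comm _ _ ▸ hl) hu
  obtain ⟨c, hlow, hup⟩ := exists_between_of_forall_le
    (s := stepLower W q y z ∪ stepLower W q z y) (t := stepUpper W q y z ∪ stepUpper W q z y)
    ⟨_, Or.inl ⟨_, _, hp, Or.inl ⟨rfl, rfl⟩⟩⟩ ⟨_, Or.inl ⟨_, _, hp, rfl⟩⟩ hle
  exact ⟨c, hs.1.insert (fun l hl => hlow (Or.inl hl)) (fun u hu => hup (Or.inl hu)),
    hs.2.insert (fun l hl => hlow (Or.inr hl)) (fun u hu => hup (Or.inr hu))⟩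

end Step

theorem extendable_empty {h : P → ℝ}
    (hh : ∀ F : Finset P, IsUpperSet (F : Set P) → |∑ a ∈ F, h a| ≤ 1) :
    Extendable ∅ h 0 := by
  refine ⟨⟨?_, ?_⟩, ⟨?_, ?_⟩⟩
  · intro G _ hG
    simp [Finset.subset_empty.1 hG]
  · intro A B hA _ hAB
    simp only [Finset.sdiff_empty] at hAB
    subst hAB
    simpa using (abs_le.1 (hh A hA)).2
  · intro G _ _
    simp
  · intro A B _ hB hAB
    simp only [Finset.sdiff_empty] at hAB
    subst hAB
    simpa [neg_le] using (abs_le.1 (hh A hB)).1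

theorem exists_sub_eq_extendable {h : P → ℝ}
    (hh : ∀ F : Finset P, IsUpperSet (F : Set P) → |∑ a ∈ F, h a| ≤ 1)
    (W : Finset P) (hW : IsUpperSet (W : Set P)) :
    ∃ y z : P → ℝ, y - z = h ∧ Extendable W y z := by
  induction W using Finset.strongInduction with
  | H W ih =>
    rcases W.eq_empty_or_nonempty with rfl | hne
    · exact ⟨h, 0, sub_zero h, extendable_empty hh⟩
    obtain ⟨q, hq⟩ := Finset.exists_minimal hne
    have hW₀ : IsUpperSet (W.erase q : Set P) := by
      rw [coe_erase]
      exact hW.erase fun b hb hbq => hq.eq_of_le hb hbq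
    obtain ⟨y, z, hyz, hs⟩ := ih _ (erase_ssubset hq.prop) hW₀
    rw [← insert_erase hq.prop] at hW
    obtain ⟨c, hc⟩ := hs.exists_insert hW₀ (notMem_erase q W) hW
    rw [insert_erase hq.prop] at hc
    exact ⟨_, _, by rw [add_sub_add_right_eq_sub, hyz], hc⟩

theorem HalfExtendable.sum_mem_Icc [Fintype P] {y z : P → ℝ} (hs : HalfExtendable univ y z)
    {F : Finset P} (hF : IsUpperSet (F : Set P)) : ∑ a ∈ F, y a ∈ Set.Icc 0 1 :=
  ⟨hs.1 F hF (subset_univ F),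
    by simpa using hs.2 F ∅ hF (coe_empty ▸ isUpperSet_empty) (by simp)⟩

theorem exists_sub_eq_of_abs_sum_le_one [Fintype P] (h : P → ℝ)
    (hh : ∀ F : Finset P, IsUpperSet (F : Set P) → |∑ a ∈ F, h a| ≤ 1) :
    ∃ y z : P → ℝ, y - z = h ∧ ∀ F : Finset P, IsUpperSet (F : Set P) →
      ∑ a ∈ F, y a ∈ Set.Icc 0 1 ∧ ∑ a ∈ F, z a ∈ Set.Icc 0 1 := by
  obtain ⟨y, z, hyz, hs⟩ := exists_sub_eq_extendable hh univ (coe_univ (α := P) ▸ isUpperSet_univ)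
  exact ⟨y, z, hyz, fun F hF => ⟨hs.1.sum_mem_Icc hF, hs.2.sum_mem_Icc hF⟩⟩

end ValuationPolytope

/-- `Val^±(P) = {h : −1 ≤ ∑_{a∈F} h(a) ≤ 1 for all filters F}` equals the Minkowski
difference `Val(P) − Val(P)`. -/
theorem valPM_eq_valPoly_sub_valPoly
    (P : Type*) [Fintype P] (le : P → P → Prop) (h : IsPartialOrder P le) :
    {h : P → ℝ | ∀ F : Finset P, (∀ a ∈ F, ∀ b, le a b → b ∈ F) →
        -1 ≤ ∑ a ∈ F, h a ∧ ∑ a ∈ F, h a ≤ 1} =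
      valPoly P le - valPoly P le := by
  classical
  let _ : PartialOrder P :=
    { le := le
      le_refl := refl_of le
      le_trans := fun _ _ _ => trans_of le
      le_antisymm := fun _ _ => antisymm_of le }
  have isFilter_iff (F : Finset P) :
      (∀ a ∈ F, ∀ b, le a b → b ∈ F) ↔ IsUpperSet (F : Set P) :=
    ⟨fun hF _ _ hab ha => hF _ ha _ hab, fun hF _ ha _ hab => hF hab ha⟩
  ext g
  constructor
  · intro hg
    obtain ⟨y, z, rfl, hyz⟩ := ValuationPolytope.exists_sub_eq_of_abs_sum_le_one g
      fun F hF => abs_le.2 (hg F ((isFilter_iff F).2 hF))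
    exact ⟨y, fun F hF => (hyz F ((isFilter_iff F).1 hF)).1,
      z, fun F hF => (hyz F ((isFilter_iff F).1 hF)).2, rfl⟩
  · rintro ⟨y, hy, z, hz, rfl⟩ F hF
    have := hy F hF
    have := hz F hF
    simp only [Pi.sub_apply, Finset.sum_sub_distrib]
    constructor <;> linarith
end

section
/- Let (P,⪯₊,⪯₋) be a double poset. The origin of ℝ^P × ℝ lies in the interior of the double order polytope T_O(P,⪯₊,⪯₋) if and only if (P,⪯₊,⪯₋) is compatible. -/
open Set Pointwise

/-!
If a partial order `l` refines both orders, the indicator functions of the principal up-sets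
of `l` lie in both order polytopes and are linearly independent (the family is triangular
with respect to `l`). So the points `(2χ, 1)`, `(0, 1)` of the polytope and their negatives
span `ℝ^P × ℝ`, and the convex hull of a symmetric spanning set is a neighbourhood of `0`.

Conversely, if the double poset is not compatible, the union of the two orders has a cycle
through two distinct points `a` and `b`. Summing the increments `h y - h x` over the
`⪯₊`-steps `x → y` of the cycle gives a linear functional that is nonnegative on `O(P,⪯₊)`
and, since the increments over the whole cycle cancel, nonpositive on `O(P,⪯₋)`. By
antisymmetry of `⪯₋` some `⪯₊`-step is strict, so the functional is positive on a rank
function of `⪯₊`. Hence the polytope lies in a closed half-space bounded by a hyperplane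
through the origin.
-/

section Linear

variable {E : Type*} [AddCommGroup E] [TopologicalSpace E] [IsTopologicalAddGroup E]
  [Module ℝ E] [ContinuousSMul ℝ E]

theorem LinearMap.eq_zero_of_zero_mem_interior_setOf_nonneg (φ : E →ₗ[ℝ] ℝ)
    (h : (0 : E) ∈ interior {x | 0 ≤ φ x}) : φ = 0 := by
  rw [mem_interior_iff_mem_nhds] at h
  have hneg : ∀ᶠ x in nhds (0 : E), 0 ≤ φ (-x) :=
    (continuous_neg.tendsto' (0 : E) 0 neg_zero).eventually h
  have hker : (LinearMap.ker φ : Set E) ∈ nhds 0 := by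
    filter_upwards [h, hneg] with x hx hx'
    simp only [map_neg, Left.nonneg_neg_iff] at hx'
    exact le_antisymm hx' hx
  exact LinearMap.ker_eq_top.1 <| Submodule.eq_top_of_nonempty_interior' _
    ⟨0, mem_interior_iff_mem_nhds.2 hker⟩

end Linear

theorem zero_mem_interior_convexHull_union_neg {E : Type*} [NormedAddCommGroup E]
    [NormedSpace ℝ E] [FiniteDimensional ℝ E] {s : Set E} (hne : s.Nonempty)
    (hs : Submodule.span ℝ s = ⊤) : (0 : E) ∈ interior (convexHull ℝ (s ∪ -s)) := by
  have hvec : vectorSpan ℝ (s ∪ -s) = ⊤ := by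
    refine eq_top_iff.2 (hs ▸ Submodule.span_le.2 fun x hx => ?_)
    have h2x : (2 : ℝ) • x ∈ vectorSpan ℝ (s ∪ -s) := by
      convert vsub_mem_vectorSpan ℝ (s := s ∪ -s) (mem_union_left _ hx)
        (mem_union_right _ (neg_mem_neg.2 hx)) using 1
      rw [vsub_eq_sub, sub_neg_eq_add, two_smul]
    simpa using (vectorSpan ℝ (s ∪ -s)).smul_mem (1 / 2 : ℝ) h2x
  have hconv := convex_convexHull ℝ (s ∪ -s)
  obtain ⟨x, hx⟩ : (interior (convexHull ℝ (s ∪ -s))).Nonempty := by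
    rw [hconv.interior_nonempty_iff_affineSpan_eq_top, affineSpan_convexHull,
      AffineSubspace.affineSpan_eq_top_iff_vectorSpan_eq_top_of_nonempty ℝ E E
        (hne.mono subset_union_left)]
    exact hvec
  have hsymm : -convexHull ℝ (s ∪ -s) = convexHull ℝ (s ∪ -s) := by
    rw [← convexHull_neg, union_neg, neg_neg, union_comm]
  have hnx : -x ∈ convexHull ℝ (s ∪ -s) := hsymm ▸ neg_mem_neg.2 (interior_subset hx)
  simpa using hconv.combo_interior_self_mem_interior hx hnx (a := 1 / 2) (b := 1 / 2)
    (by norm_num) (by norm_num) (by norm_num)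

theorem Submodule.span_image_prodMk_one_eq_top {R E : Type*} [Ring R] [AddCommGroup E]
    [Module R E] {t : Set E} (h0 : (0 : E) ∈ t) (ht : Submodule.span R t = ⊤) :
    Submodule.span R ((fun x => (x, (1 : R))) '' t) = ⊤ := by
  set V := Submodule.span R ((fun x => (x, (1 : R))) '' t)
  have hbase : ((0 : E), (1 : R)) ∈ V := Submodule.subset_span ⟨0, h0, rfl⟩
  have hinl : ∀ x, (x, (0 : R)) ∈ V := by
    have : t ⊆ V.comap (LinearMap.inl R E R) := fun x hx => by
      simpa using V.sub_mem (Submodule.subset_span ⟨x, hx, rfl⟩) hbase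
    have hcomap := Submodule.span_le.2 this
    rw [ht, top_le_iff] at hcomap
    exact fun x => by simpa using Submodule.eq_top_iff'.1 hcomap x
  refine Submodule.eq_top_iff'.2 fun ⟨x, c⟩ => ?_
  simpa using V.add_mem (hinl x) (V.smul_mem c hbase)

section Relations

variable {P : Type*} [Fintype P]

theorem exists_real_monotone_strict_of_isPartialOrder {le : P → P → Prop}
    (hle : IsPartialOrder P le) : ∃ r : P → ℝ,
      (∀ x y, le x y → r x ≤ r y) ∧ ∀ x y, le x y → x ≠ y → r x < r y := by
  have hsub : ∀ {x y}, le x y → {z | le z x} ⊆ {z | le z y} :=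
    fun hxy z hz => hle.trans _ _ _ hz hxy
  refine ⟨fun x => ({z | le z x}.ncard : ℝ), fun x y hxy => ?_, fun x y hxy hne => ?_⟩
  · exact Nat.cast_le.2 (Set.ncard_le_ncard (hsub hxy))
  · exact Nat.cast_lt.2 (Set.ncard_lt_ncard
      ⟨hsub hxy, fun h => hne (hle.antisymm _ _ hxy (h (hle.refl y)))⟩)

noncomputable def upIndicator (le : P → P → Prop) (t : P) : P → ℝ :=
  Set.indicator {x | le t x} 1

theorem upIndicator_mem_orderPoly {l le : P → P → Prop} [IsTrans P l]
    (hle : ∀ a b, le a b → l a b) (t : P) : upIndicator l t ∈ orderPoly P le := by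
  refine ⟨fun a => ?_, fun a b hab => ?_⟩
  · by_cases h : l t a <;> simp [upIndicator, h]
  · by_cases h : l t a
    · simp [upIndicator, h, _root_.trans h (hle a b hab)]
    · simp only [upIndicator, Set.indicator_of_notMem (show a ∉ {x | l t x} from h)]
      exact Set.indicator_nonneg (fun _ _ => zero_le_one) b

theorem linearIndependent_upIndicator {l : P → P → Prop} (hl : IsPartialOrder P l) :
    LinearIndependent ℝ (upIndicator l) := by
  obtain ⟨r, -, hr⟩ := exists_real_monotone_strict_of_isPartialOrder hl
  classical
  refine Fintype.linearIndependent_iff.2 fun g hg => ?_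
  by_contra! ⟨i, hi⟩
  -- the coefficient of an `l`-minimal element of the support survives evaluation at it
  obtain ⟨x, hx, hmin⟩ := Finset.exists_min_image (Finset.univ.filter (g · ≠ 0)) r
    ⟨i, by simpa using hi⟩
  have hgx : g x = 0 := by
    have := congr_fun hg x
    rw [Finset.sum_apply, Finset.sum_eq_single x] at this
    · simpa [upIndicator, hl.refl x] using this
    · intro s _ hsx
      by_cases hls : l s x
      · have : g s = 0 := by
          by_contra hgs
          exact (hr s x hls hsx).not_ge (hmin s (by simpa using hgs))
        simp [this]
      · simp [upIndicator, hls]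
    · simp
  exact (Finset.mem_filter.1 hx).2 hgx

theorem span_range_upIndicator {l : P → P → Prop} (hl : IsPartialOrder P l) :
    Submodule.span ℝ (range (upIndicator l)) = ⊤ :=
  (linearIndependent_upIndicator hl).span_eq_top_of_card_eq_finrank'
    (Module.finrank_fintype_fun_eq_card ℝ).symm

end Relations

section Chains

variable {P : Type*} {lep lem : P → P → Prop}

theorem compatible_of_antisymm_reflTransGen
    (h : ∀ a b, Relation.ReflTransGen (lep ⊔ lem) a b →
      Relation.ReflTransGen (lep ⊔ lem) b a → a = b) :
    Compatible P lep lem := by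
  have : IsPartialOrder P (Relation.ReflTransGen (lep ⊔ lem)) :=
    { refl := fun _ => .refl
      trans := fun _ _ _ => .trans
      antisymm := h }
  obtain ⟨l, hl, hext⟩ := extend_partialOrder (Relation.ReflTransGen (lep ⊔ lem))
  exact ⟨l, hl, fun a b hab => hext _ _ (.single (Or.inl hab)),
    fun a b hab => hext _ _ (.single (Or.inr hab))⟩

theorem exists_linearMap_of_reflTransGen (hm : IsPreorder P lem) {r : P → ℝ}
    (hr_mono : ∀ x y, lep x y → r x ≤ r y) (hr : ∀ x y, lep x y → x ≠ y → r x < r y)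
    {a b : P} (hab : Relation.ReflTransGen (lep ⊔ lem) a b) :
    ∃ φ : (P → ℝ) →ₗ[ℝ] ℝ, (∀ f : P → ℝ, (∀ x y, lep x y → f x ≤ f y) → 0 ≤ φ f) ∧
      (∀ g : P → ℝ, (∀ x y, lem x y → g x ≤ g y) → φ g ≤ g b - g a) ∧
      (φ r = 0 → lem a b) := by
  induction hab with
  | refl => exact ⟨0, fun _ _ => le_rfl, fun g _ => by simp, fun _ => refl_of lem a⟩
  | @tail x y _ hxy ih =>
    obtain ⟨φ, hφp, hφm, hφr⟩ := ih
    rcases hxy with hxy | hxy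
    · refine ⟨φ + ((LinearMap.proj y : (P → ℝ) →ₗ[ℝ] ℝ) - LinearMap.proj x),
        fun f hf => ?_, fun g hg => ?_, fun h => ?_⟩
      · simpa using add_nonneg (hφp f hf) (sub_nonneg.2 (hf x y hxy))
      · simpa using add_le_add_left (hφm g hg) (g y - g x)
      · obtain rfl | hne := eq_or_ne x y
        · simpa using hφr (by simpa using h)
        · simp only [LinearMap.add_apply, LinearMap.sub_apply, LinearMap.coe_proj,
            Function.eval] at h
          linarith [hφp r hr_mono, hr x y hxy hne]
    · exact ⟨φ, hφp, fun g hg => (hφm g hg).trans (by linarith [hg x y hxy]),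
        fun h => _root_.trans (hφr h) hxy⟩

end Chains

section DoublePoset

variable {P : Type*} [Fintype P] {lep lem : P → P → Prop}

theorem exists_separating_linearMap_of_not_compatible (hp : IsPartialOrder P lep)
    (hm : IsPartialOrder P lem) (h : ¬Compatible P lep lem) :
    ∃ φ : (P → ℝ) →ₗ[ℝ] ℝ, φ ≠ 0 ∧ (∀ f ∈ orderPoly P lep, 0 ≤ φ f) ∧
      ∀ g ∈ orderPoly P lem, φ g ≤ 0 := by
  obtain ⟨a, b, hab, hba, hne⟩ : ∃ a b, Relation.ReflTransGen (lep ⊔ lem) a b ∧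
      Relation.ReflTransGen (lep ⊔ lem) b a ∧ a ≠ b := by
    by_contra! hanti
    exact h (compatible_of_antisymm_reflTransGen hanti)
  obtain ⟨r, hr_mono, hr⟩ := exists_real_monotone_strict_of_isPartialOrder hp
  obtain ⟨φ, hφp, hφm, hφr⟩ :=
    exists_linearMap_of_reflTransGen hm.toIsPreorder hr_mono hr hab
  obtain ⟨ψ, hψp, hψm, hψr⟩ :=
    exists_linearMap_of_reflTransGen hm.toIsPreorder hr_mono hr hba
  refine ⟨φ + ψ, fun h0 => hne ?_, fun f hf => add_nonneg (hφp f hf.2) (hψp f hf.2),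
    fun g hg => by rw [LinearMap.add_apply]; linarith [hφm g hg.2, hψm g hg.2]⟩
  have hsum : φ r + ψ r = 0 := by simpa using LinearMap.congr_fun h0 r
  have := hφp r hr_mono
  have := hψp r hr_mono
  exact antisymm_of lem (hφr (by linarith)) (hψr (by linarith))

theorem zero_notMem_interior_doubleOrderPoly {φ : (P → ℝ) →ₗ[ℝ] ℝ} (hφ : φ ≠ 0)
    (hp : ∀ f ∈ orderPoly P lep, 0 ≤ φ f) (hm : ∀ g ∈ orderPoly P lem, φ g ≤ 0) :
    (0 : (P → ℝ) × ℝ) ∉ interior (doubleOrderPoly P lep lem) := by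
  set ψ := φ.comp (LinearMap.fst ℝ (P → ℝ) ℝ)
  have hsub : doubleOrderPoly P lep lem ⊆ {x | 0 ≤ ψ x} := by
    refine convexHull_min ?_ (convex_halfSpace_ge ψ.isLinear 0)
    rintro _ (⟨_, ⟨f, hf, rfl⟩, rfl⟩ | ⟨_, ⟨g, hg, rfl⟩, rfl⟩)
    · simpa [ψ] using hp f hf
    · simpa [ψ] using mul_nonpos_of_nonneg_of_nonpos zero_le_two (hm g hg)
  intro h0
  refine hφ (LinearMap.ext fun f => ?_)
  simpa [ψ] using LinearMap.congr_fun
    (ψ.eq_zero_of_zero_mem_interior_setOf_nonneg (interior_mono hsub h0)) (f, 0)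

theorem zero_mem_interior_doubleOrderPoly_of_le {l : P → P → Prop} (hl : IsPartialOrder P l)
    (hlp : ∀ a b, lep a b → l a b) (hlm : ∀ a b, lem a b → l a b) :
    (0 : (P → ℝ) × ℝ) ∈ interior (doubleOrderPoly P lep lem) := by
  set B := insert 0 (range (upIndicator l))
  have hB : ∀ le : P → P → Prop, (∀ a b, le a b → l a b) → B ⊆ orderPoly P le := by
    rintro le hle _ (rfl | ⟨t, rfl⟩)
    · exact ⟨fun _ => by simp, fun _ _ _ => le_rfl⟩
    · exact upIndicator_mem_orderPoly hle t
  have hspan : Submodule.span ℝ ((2 : ℝ) • B) = ⊤ := by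
    rw [Submodule.span_smul_eq_of_isUnit _ _ (by norm_num), eq_top_iff,
      ← span_range_upIndicator hl]
    exact Submodule.span_mono (subset_insert _ _)
  have h0 : (0 : P → ℝ) ∈ (2 : ℝ) • B := ⟨0, mem_insert _ _, smul_zero _⟩
  refine interior_mono (convexHull_mono (union_subset_union ?_ ?_))
    (zero_mem_interior_convexHull_union_neg ⟨_, mem_image_of_mem _ h0⟩
      (Submodule.span_image_prodMk_one_eq_top h0 hspan))
  · exact image_mono (smul_set_mono (hB lep hlp))
  · rintro x ⟨_, ⟨f, hf, rfl⟩, hx⟩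
    refine ⟨(-2 : ℝ) • f, smul_mem_smul_set (hB lem hlm hf), ?_⟩
    rw [← neg_neg x, ← hx]
    simp

end DoublePoset

/-- The origin lies in the interior of the double order polytope iff the double poset
is compatible. -/
theorem zero_mem_interior_doubleOrderPoly_iff_compatible
    (P : Type*) [Fintype P] (lep lem : P → P → Prop)
    (hp : IsPartialOrder P lep) (hm : IsPartialOrder P lem) :
    ((fun _ => (0 : ℝ)), (0 : ℝ)) ∈ interior (doubleOrderPoly P lep lem) ↔
      Compatible P lep lem := by
  refine ⟨fun h0 => ?_, fun ⟨l, hl, hlp, hlm⟩ =>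
    zero_mem_interior_doubleOrderPoly_of_le hl.toIsPartialOrder hlp hlm⟩
  by_contra hc
  obtain ⟨φ, hφ, hφp, hφm⟩ := exists_separating_linearMap_of_not_compatible hp hm hc
  exact zero_notMem_interior_doubleOrderPoly hφ hφp hφm h0
end

section
/- Let P₁, P₂ ⊆ ℝⁿ be full-dimensional anti-blocking polytopes. Then the polar of their Minkowski difference satisfies (P₁ − P₂)° = conv(A(P₁) ∪ (−A(P₂))). -/
open Set Pointwise

/-- `Q ⊆ ℝⁿ` is anti-blocking: contained in the nonnegative orthant and down-closed
within it. -/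
def IsAntiBlocking {n : ℕ} (Q : Set (Fin n → ℝ)) : Prop :=
  (∀ x ∈ Q, ∀ i, 0 ≤ x i) ∧
  ∀ q ∈ Q, ∀ p : Fin n → ℝ, (∀ i, 0 ≤ p i ∧ p i ≤ q i) → p ∈ Q

/-- `Q` is a polytope: the convex hull of a finite set. -/
def IsPolytope {n : ℕ} (Q : Set (Fin n → ℝ)) : Prop :=
  ∃ V : Finset (Fin n → ℝ), Q = convexHull ℝ (V : Set (Fin n → ℝ))

/-- The anti-blocking polytope `A(Q)` associated to `Q ⊆ ℝⁿ_{≥0}`. -/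
def antiBlocker {n : ℕ} (Q : Set (Fin n → ℝ)) : Set (Fin n → ℝ) :=
  {d | (∀ i, 0 ≤ d i) ∧ ∀ x ∈ Q, ∑ i, d i * x i ≤ 1}

/-- The polar of a subset of `ℝⁿ` with respect to the standard inner product. -/
def polarN {n : ℕ} (S : Set (Fin n → ℝ)) : Set (Fin n → ℝ) :=
  {y | ∀ x ∈ S, ∑ i, y i * x i ≤ 1}

private lemma zero_mem_ab {n : ℕ} {P : Set (Fin n → ℝ)} (hab : IsAntiBlocking P)
    (hne : P.Nonempty) : (0 : Fin n → ℝ) ∈ P := by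
  obtain ⟨q, hq⟩ := hne
  exact hab.2 q hq 0 (fun i => ⟨le_refl 0, hab.1 q hq i⟩)

private lemma interior_pos {n : ℕ} {P : Set (Fin n → ℝ)} (h : ∀ x ∈ P, ∀ i, 0 ≤ x i)
    {x : Fin n → ℝ} (hx : x ∈ interior P) (i : Fin n) : 0 < x i := by
  obtain ⟨ε, hε, hball⟩ := Metric.mem_nhds_iff.1 (mem_interior_iff_mem_nhds.1 hx)
  set y : Fin n → ℝ := fun j => if j = i then x i - ε / 2 else x j with hy
  have hyP : y ∈ P := by
    apply hball
    rw [Metric.mem_ball, dist_pi_lt_iff hε]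
    intro j
    by_cases hj : j = i
    · simp only [hy, hj, if_pos rfl, Real.dist_eq]
      rw [show x i - ε / 2 - x i = -(ε / 2) by ring, abs_neg, abs_of_nonneg (by linarith)]
      linarith
    · simpa [hy, hj] using hε
  have := h y hyP i
  simp only [hy, if_pos rfl] at this
  linarith

private lemma convex_polarN {n : ℕ} (S : Set (Fin n → ℝ)) : Convex ℝ (polarN S) := by
  intro w hw z hz s t hs ht hst
  intro x hx
  have h1 := hw x hx
  have h2 := hz x hx
  have hsum : ∑ i, (s • w + t • z) i * x i
      = s * (∑ i, w i * x i) + t * (∑ i, z i * x i) := by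
    rw [Finset.mul_sum, Finset.mul_sum, ← Finset.sum_add_distrib]
    refine Finset.sum_congr rfl fun i _ => ?_
    simp only [Pi.add_apply, Pi.smul_apply, smul_eq_mul]
    ring
  rw [hsum]
  nlinarith [mul_le_mul_of_nonneg_left h1 hs, mul_le_mul_of_nonneg_left h2 ht]

/-- For full-dimensional anti-blocking polytopes,
`(P₁ − P₂)° = conv(A(P₁) ∪ (−A(P₂)))`. -/
theorem polar_sub_antiBlocking
    {n : ℕ} (P₁ P₂ : Set (Fin n → ℝ))
    (h₁poly : IsPolytope P₁) (h₁ab : IsAntiBlocking P₁)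
    (h₁full : (interior P₁).Nonempty)
    (h₂poly : IsPolytope P₂) (h₂ab : IsAntiBlocking P₂)
    (h₂full : (interior P₂).Nonempty) :
    polarN (P₁ - P₂) = convexHull ℝ (antiBlocker P₁ ∪ -(antiBlocker P₂)) := by
  obtain ⟨x₁, hx₁i⟩ := h₁full
  obtain ⟨x₂, hx₂i⟩ := h₂full
  have hx₁ : x₁ ∈ P₁ := interior_subset hx₁i
  have hx₂ : x₂ ∈ P₂ := interior_subset hx₂i
  have hx₁pos := interior_pos h₁ab.1 hx₁i
  have hx₂pos := interior_pos h₂ab.1 hx₂i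
  have h0₁ : (0 : Fin n → ℝ) ∈ P₁ := zero_mem_ab h₁ab ⟨x₁, hx₁⟩
  have h0₂ : (0 : Fin n → ℝ) ∈ P₂ := zero_mem_ab h₂ab ⟨x₂, hx₂⟩
  apply Set.Subset.antisymm
  · -- hard direction : polar ⊆ hull
    intro y hy
    set yp : Fin n → ℝ := fun i => max (y i) 0 with hyp
    set ym : Fin n → ℝ := fun i => max (-(y i)) 0 with hym
    have hyp0 : ∀ i, 0 ≤ yp i := fun i => le_max_right _ _
    have hym0 : ∀ i, 0 ≤ ym i := fun i => le_max_right _ _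
    have hkey : ∀ p ∈ P₁, ∀ q ∈ P₂,
        (∑ i, yp i * p i) + (∑ i, ym i * q i) ≤ 1 := by
      intro p hp q hq
      set p' : Fin n → ℝ := fun i => if 0 < y i then p i else 0 with hp'
      set q' : Fin n → ℝ := fun i => if y i < 0 then q i else 0 with hq'
      have hp'P : p' ∈ P₁ := h₁ab.2 p hp p' (fun i => by
        by_cases h : 0 < y i <;> simp [hp', h, h₁ab.1 p hp i])
      have hq'P : q' ∈ P₂ := h₂ab.2 q hq q' (fun i => by
        by_cases h : y i < 0 <;> simp [hq', h, h₂ab.1 q hq i])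
      have hle := hy (p' - q') (sub_mem_sub hp'P hq'P)
      have e1 : ∀ i, y i * p' i = yp i * p i := by
        intro i
        by_cases h : 0 < y i
        · simp [hp', hyp, h, max_eq_left h.le]
        · simp [hp', hyp, h, max_eq_right (not_lt.1 h)]
      have e2 : ∀ i, y i * q' i = -(ym i * q i) := by
        intro i
        by_cases h : y i < 0
        · simp only [hq', hym, if_pos h]
          rw [max_eq_left (by linarith : (0:ℝ) ≤ -(y i))]
          ring
        · simp only [hq', hym, if_neg h]
          rw [max_eq_right (by linarith [not_lt.1 h] : -(y i) ≤ 0)]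
          ring
      have hsum : (∑ i, yp i * p i) + (∑ i, ym i * q i) = ∑ i, y i * (p' - q') i := by
        rw [show (∑ i, y i * (p' - q') i) = (∑ i, y i * p' i) - ∑ i, y i * q' i by
          rw [← Finset.sum_sub_distrib]
          exact Finset.sum_congr rfl fun i _ => by simp [mul_sub]]
        rw [Finset.sum_congr rfl fun i _ => e1 i, Finset.sum_congr rfl fun i _ => e2 i,
          Finset.sum_neg_distrib]
        ring
      rw [hsum]
      exact hle
    set S₁ : Set ℝ := (fun p => ∑ i, yp i * p i) '' P₁ with hS₁
    set S₂ : Set ℝ := (fun q => ∑ i, ym i * q i) '' P₂ with hS₂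
    have hS₁ne : S₁.Nonempty := ⟨_, ⟨0, h0₁, rfl⟩⟩
    have hS₂ne : S₂.Nonempty := ⟨_, ⟨0, h0₂, rfl⟩⟩
    have hS₁bdd : BddAbove S₁ := by
      refine ⟨1, ?_⟩
      rintro v ⟨p, hp, rfl⟩
      have h := hkey p hp 0 h0₂
      simp only [Pi.zero_apply, mul_zero, Finset.sum_const_zero, add_zero] at h
      exact h
    have hS₂bdd : BddAbove S₂ := by
      refine ⟨1, ?_⟩
      rintro v ⟨q, hq, rfl⟩
      have h := hkey 0 h0₁ q hq
      simp only [Pi.zero_apply, mul_zero, Finset.sum_const_zero, zero_add] at h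
      exact h
    set a : ℝ := sSup S₁ with haa
    set b : ℝ := sSup S₂ with hbb
    have ha_ub : ∀ p ∈ P₁, ∑ i, yp i * p i ≤ a := fun p hp => le_csSup hS₁bdd ⟨p, hp, rfl⟩
    have hb_ub : ∀ q ∈ P₂, ∑ i, ym i * q i ≤ b := fun q hq => le_csSup hS₂bdd ⟨q, hq, rfl⟩
    have ha0 : 0 ≤ a := by
      have h := ha_ub 0 h0₁
      simpa using h
    have hb0 : 0 ≤ b := by
      have h := hb_ub 0 h0₂
      simpa using h
    have habd : a + b ≤ 1 := by
      have h1 : a ≤ 1 - b := by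
        apply csSup_le hS₁ne
        rintro v ⟨p, hp, rfl⟩
        have h2 : b ≤ 1 - ∑ i, yp i * p i := by
          apply csSup_le hS₂ne
          rintro w ⟨q, hq, rfl⟩
          linarith [hkey p hp q hq]
        linarith
      linarith
    have haz : ∀ j, a = 0 → yp j = 0 := by
      intro j ha
      have hsum : ∑ i, yp i * x₁ i ≤ a := ha_ub x₁ hx₁
      have hterm : yp j * x₁ j ≤ ∑ i, yp i * x₁ i :=
        Finset.single_le_sum (fun i _ => mul_nonneg (hyp0 i) (hx₁pos i).le)
          (Finset.mem_univ j)
      have h0 : 0 ≤ yp j * x₁ j := mul_nonneg (hyp0 j) (hx₁pos j).le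
      have hzz : yp j * x₁ j = 0 := le_antisymm (by rw [ha] at hsum; linarith) h0
      rcases mul_eq_zero.1 hzz with h | h
      · exact h
      · exact absurd h (hx₁pos j).ne'
    have hbz : ∀ j, b = 0 → ym j = 0 := by
      intro j hb
      have hsum : ∑ i, ym i * x₂ i ≤ b := hb_ub x₂ hx₂
      have hterm : ym j * x₂ j ≤ ∑ i, ym i * x₂ i :=
        Finset.single_le_sum (fun i _ => mul_nonneg (hym0 i) (hx₂pos i).le)
          (Finset.mem_univ j)
      have h0 : 0 ≤ ym j * x₂ j := mul_nonneg (hym0 j) (hx₂pos j).le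
      have hzz : ym j * x₂ j = 0 := le_antisymm (by rw [hb] at hsum; linarith) h0
      rcases mul_eq_zero.1 hzz with h | h
      · exact h
      · exact absurd h (hx₂pos j).ne'
    set u : Fin n → ℝ := if a = 0 then 0 else a⁻¹ • yp with hu
    set v : Fin n → ℝ := if b = 0 then 0 else -(b⁻¹ • ym) with hv
    have hau : a • u = yp := by
      by_cases ha : a = 0
      · rw [hu, if_pos ha, smul_zero]
        funext j
        exact (haz j ha).symm
      · rw [hu, if_neg ha, smul_smul, mul_inv_cancel₀ ha, one_smul]
    have hbv : b • v = -ym := by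
      by_cases hb : b = 0
      · rw [hv, if_pos hb, smul_zero]
        funext j
        simp [hbz j hb]
      · rw [hv, if_neg hb, smul_neg, smul_smul, mul_inv_cancel₀ hb, one_smul]
    have h0A : (0 : Fin n → ℝ) ∈ antiBlocker P₁ :=
      ⟨fun i => le_refl 0, fun x _ => by simp⟩
    have huA : u ∈ antiBlocker P₁ := by
      by_cases ha : a = 0
      · rw [hu, if_pos ha]; exact h0A
      · have hapos : 0 < a := lt_of_le_of_ne ha0 (Ne.symm ha)
        rw [hu, if_neg ha]
        refine ⟨fun i => mul_nonneg (inv_nonneg.2 hapos.le) (hyp0 i), fun x hx => ?_⟩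
        have hrw : ∑ i, (a⁻¹ • yp) i * x i = a⁻¹ * ∑ i, yp i * x i := by
          rw [Finset.mul_sum]
          exact Finset.sum_congr rfl fun i _ => by
            simp only [Pi.smul_apply, smul_eq_mul]; ring
        rw [hrw]
        calc a⁻¹ * ∑ i, yp i * x i ≤ a⁻¹ * a :=
              mul_le_mul_of_nonneg_left (ha_ub x hx) (inv_nonneg.2 hapos.le)
          _ = 1 := inv_mul_cancel₀ ha
    have hvA : v ∈ -(antiBlocker P₂) := by
      rw [Set.mem_neg]
      by_cases hb : b = 0
      · rw [hv, if_pos hb, neg_zero]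
        exact ⟨fun i => le_refl 0, fun x _ => by simp⟩
      · have hbpos : 0 < b := lt_of_le_of_ne hb0 (Ne.symm hb)
        rw [hv, if_neg hb, neg_neg]
        refine ⟨fun i => mul_nonneg (inv_nonneg.2 hbpos.le) (hym0 i), fun x hx => ?_⟩
        have hrw : ∑ i, (b⁻¹ • ym) i * x i = b⁻¹ * ∑ i, ym i * x i := by
          rw [Finset.mul_sum]
          exact Finset.sum_congr rfl fun i _ => by
            simp only [Pi.smul_apply, smul_eq_mul]; ring
        rw [hrw]
        calc b⁻¹ * ∑ i, ym i * x i ≤ b⁻¹ * b :=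
              mul_le_mul_of_nonneg_left (hb_ub x hx) (inv_nonneg.2 hbpos.le)
          _ = 1 := inv_mul_cancel₀ hb
    have hy_eq : y = a • u + b • v := by
      rw [hau, hbv]
      funext i
      simp only [Pi.add_apply, Pi.neg_apply, hyp, hym]
      rcases le_total 0 (y i) with h | h
      · rw [max_eq_left h, max_eq_right (by linarith : -(y i) ≤ 0)]; ring
      · rw [max_eq_right h, max_eq_left (by linarith : (0:ℝ) ≤ -(y i))]; ring
    have hconv := convex_convexHull ℝ (antiBlocker P₁ ∪ -(antiBlocker P₂))
    have hmem := hconv.sum_mem (t := (Finset.univ : Finset (Fin 3)))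
      (w := ![a, b, 1 - a - b]) (z := ![u, v, 0])
      (by
        intro j _
        fin_cases j <;> simp [ha0, hb0] <;> linarith)
      (by rw [Fin.sum_univ_three]; simp)
      (by
        intro j _
        fin_cases j
        · exact subset_convexHull ℝ _ (Or.inl huA)
        · exact subset_convexHull ℝ _ (Or.inr hvA)
        · exact subset_convexHull ℝ _ (Or.inl h0A))
    have hfin : ∑ j : Fin 3, ![a, b, 1 - a - b] j • ![u, v, (0 : Fin n → ℝ)] j
        = a • u + b • v := by
      rw [Fin.sum_univ_three]
      simp
    rw [hy_eq, ← hfin]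
    exact hmem
  · -- easy direction : hull ⊆ polar
    apply convexHull_min _ (convex_polarN _)
    rintro d (hd | hd)
    · intro x hx
      rw [Set.mem_sub] at hx
      obtain ⟨p, hp, q, hq, rfl⟩ := hx
      have h1 : ∑ i, d i * (p - q) i = (∑ i, d i * p i) - ∑ i, d i * q i := by
        rw [← Finset.sum_sub_distrib]
        exact Finset.sum_congr rfl fun i _ => by simp [mul_sub]
      rw [h1]
      have h2 := hd.2 p hp
      have h3 : 0 ≤ ∑ i, d i * q i :=
        Finset.sum_nonneg fun i _ => mul_nonneg (hd.1 i) (h₂ab.1 q hq i)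
      linarith
    · rw [Set.mem_neg] at hd
      intro x hx
      rw [Set.mem_sub] at hx
      obtain ⟨p, hp, q, hq, rfl⟩ := hx
      have h2 := hd.2 q hq
      have h3 : 0 ≤ ∑ i, (-d) i * p i :=
        Finset.sum_nonneg fun i _ => mul_nonneg (hd.1 i) (h₁ab.1 p hp i)
      have h1 : ∑ i, d i * (p - q) i = (∑ i, (-d) i * q i) - ∑ i, (-d) i * p i := by
        rw [← Finset.sum_sub_distrib]
        refine Finset.sum_congr rfl fun i _ => by
          simp only [Pi.sub_apply, Pi.neg_apply]; ring
      rw [h1]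
      linarith
end

section
/- Let P₁, P₂ ⊆ ℝⁿ be anti-blocking polytopes. If x ∈ P₁ − P₂ and x = x⁺ − x⁻ is its decomposition into componentwise positive and negative parts (x⁺_i = max(x_i,0), x⁻_i = max(−x_i,0)), then x⁺ ∈ P₁ and x⁻ ∈ P₂. Consequently, P₁ − P₂ = ⋃_{J ⊆ [n]} (P₁|_J − P₂|_{Jᶜ}), where P|_J = {x ∈ P : x_j = 0 for all j ∉ J}. -/
open Set Pointwise

/-- The face `Q|_J = {x ∈ Q : x_j = 0 for j ∉ J}` of an anti-blocking polytope. -/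
def restrictTo {n : ℕ} (Q : Set (Fin n → ℝ)) (J : Finset (Fin n)) :
    Set (Fin n → ℝ) :=
  {x ∈ Q | ∀ j ∉ J, x j = 0}

/-- For anti-blocking polytopes `P₁, P₂`: if `x ∈ P₁ − P₂` then its positive part lies
in `P₁` and its negative part in `P₂`; consequently
`P₁ − P₂ = ⋃_{J ⊆ [n]} (P₁|_J − P₂|_{Jᶜ})`. -/
theorem antiBlocking_sub_decomposition
    {n : ℕ} (P₁ P₂ : Set (Fin n → ℝ))
    (h₁poly : IsPolytope P₁) (h₁ab : IsAntiBlocking P₁)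
    (h₂poly : IsPolytope P₂) (h₂ab : IsAntiBlocking P₂) :
    (∀ x ∈ P₁ - P₂,
      (fun i => max (x i) 0) ∈ P₁ ∧ (fun i => max (-(x i)) 0) ∈ P₂) ∧
    P₁ - P₂ = ⋃ J : Finset (Fin n), (restrictTo P₁ J - restrictTo P₂ Jᶜ) := by
  have key : ∀ x ∈ P₁ - P₂,
      (fun i => max (x i) 0) ∈ P₁ ∧ (fun i => max (-(x i)) 0) ∈ P₂ := by
    rintro x ⟨p, hp, q, hq, rfl⟩
    constructor
    · exact h₁ab.2 p hp _ (fun i => ⟨le_max_right _ _,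
        max_le (by simpa using (h₂ab.1 q hq i)) (h₁ab.1 p hp i)⟩)
    · exact h₂ab.2 q hq _ (fun i => ⟨le_max_right _ _,
        max_le (by simp [Pi.sub_apply]; linarith [h₁ab.1 p hp i]) (h₂ab.1 q hq i)⟩)
  refine ⟨key, Set.Subset.antisymm ?_ ?_⟩
  · intro x hx
    obtain ⟨h1, h2⟩ := key x hx
    refine Set.mem_iUnion.2 ⟨Finset.univ.filter (fun i => 0 < x i), ?_⟩
    refine ⟨fun i => max (x i) 0, ⟨h1, ?_⟩, fun i => max (-(x i)) 0, ⟨h2, ?_⟩, ?_⟩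
    · intro j hj
      simp only [Finset.mem_filter, Finset.mem_univ, true_and, not_lt] at hj
      simpa using hj
    · intro j hj
      simp only [Finset.mem_compl, Finset.mem_filter, Finset.mem_univ, true_and,
        not_not] at hj
      simp [le_of_lt hj]
    · funext i
      simp only [Pi.sub_apply]
      rcases le_total (x i) 0 with h | h
      · simp [h, max_eq_right (neg_nonneg.2 h)]
      · simp [h, max_eq_right (neg_nonpos.2 h)]
  · refine Set.iUnion_subset fun J => ?_
    rintro x ⟨p, hp, q, hq, rfl⟩
    exact ⟨p, hp.1, q, hq.1, rfl⟩
end
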